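/- arXiv:2510.25291 — 8 statements merged into one kernel-verified Lean document; each statement's English description precedes it below -/
import Mathlib

section
/- Consider the SIS co-colonization system (★) with P patches and N strains, where the connectivity matrix 𝒟 is Metzler with zero row sums. Then the set Ω of states with every coordinate in [0,1] and, in each patch p, total S_p + Σ_i I_p^i + Σ_{i,j} D_p^{ij} = 1, is positively invariant: every solution of (★) with initial data in Ω remains in Ω for all t ≥ 0. -/
/-!
In each patch the total `T_p = S_p + Σ I_p^i + Σ D_p^{ij}` satisfies
`T_p' = r_p (1 - T_p) + δ (𝒟T)_p`; since `𝒟` has zero row sums the constant `1` solves the same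
Lipschitz ODE, so `T ≡ 1` by uniqueness. For nonnegativity the vector field is quasi-positive with
a margin: on a bounded set of states, if a coordinate is `≤ 0` and all coordinates are `≥ -V`, its
derivative is `≥ -C V` (migration is Metzler, all loss terms are proportional to the coordinate
itself, and the gain terms are bilinear). Then no coordinate can reach the barrier `-ε e^{Kt}`
with `K > C`, and `ε → 0`. The upper bounds follow from `T ≡ 1`.
-/

open Set Filter Topology

theorem HasDerivAt.nonpos_of_le_left {g : ℝ → ℝ} {g' a τ : ℝ} (h : HasDerivAt g g' τ)
    (ha : a < τ) (hle : ∀ s ∈ Ioo a τ, g τ ≤ g s) : g' ≤ 0 := by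
  have hslope : Tendsto (slope g τ) (𝓝[<] τ) (𝓝 g') :=
    (hasDerivAt_iff_tendsto_slope.1 h).mono_left (nhdsWithin_mono _ fun s hs => ne_of_lt hs)
  refine le_of_tendsto hslope ?_
  filter_upwards [Ioo_mem_nhdsLT ha] with s hs
  rw [slope_def_field]
  exact div_nonpos_of_nonneg_of_nonpos (sub_nonneg.2 (hle s hs)) (sub_nonpos.2 hs.2.le)

theorem exists_first_nonpos {ι : Type*} [Finite ι] {g : ι → ℝ → ℝ} {b t₀ : ℝ} {a₀ : ι}
    (hg : ∀ a, ContinuousOn (g a) (Icc 0 b)) (h0 : ∀ a, 0 < g a 0)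
    (ht₀ : t₀ ∈ Icc 0 b) (ha₀ : g a₀ t₀ ≤ 0) :
    ∃ τ ∈ Ioc 0 b, ∃ a, g a τ ≤ 0 ∧ ∀ c, 0 ≤ g c τ ∧ ∀ s ∈ Ico 0 τ, 0 < g c s := by
  set A := ⋃ a, Icc 0 b ∩ g a ⁻¹' Iic 0
  have hA : IsClosed A :=
    isClosed_iUnion_of_finite fun a =>
      (hg a).preimage_isClosed_of_isClosed isClosed_Icc isClosed_Iic
  have hAbdd : BddBelow A := ⟨0, fun s hs => (mem_iUnion.1 hs).choose_spec.1.1⟩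
  obtain ⟨a, hτb, hτa⟩ := mem_iUnion.1 (hA.csInf_mem ⟨t₀, mem_iUnion.2 ⟨a₀, ht₀, ha₀⟩⟩ hAbdd)
  set τ := sInf A
  have hτa : g a τ ≤ 0 := hτa
  have hτ0 : 0 < τ := hτb.1.lt_of_ne fun h => (h0 a).not_ge (h ▸ hτa)
  have hbefore : ∀ c, ∀ s ∈ Ico 0 τ, 0 < g c s := fun c s hs => not_le.1 fun hcs =>
    (csInf_le hAbdd (mem_iUnion.2 ⟨c, ⟨hs.1, hs.2.le.trans hτb.2⟩, hcs⟩)).not_gt hs.2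
  refine ⟨τ, ⟨hτ0, hτb.2⟩, a, hτa, fun c => ⟨?_, hbefore c⟩⟩
  have hlim : Tendsto (g c) (𝓝[<] τ) (𝓝 (g c τ)) := by
    have := ((hg c τ hτb).mono (s := Ioo 0 τ) fun s hs => ⟨hs.1.le, hs.2.le.trans hτb.2⟩).tendsto
    rwa [nhdsWithin_Ioo_eq_nhdsLT hτ0] at this
  refine ge_of_tendsto hlim ?_
  filter_upwards [Ioo_mem_nhdsLT hτ0] with s hs
  exact (hbefore c s ⟨hs.1.le, hs.2⟩).le

theorem nonneg_on_Icc_of_quasipositive {ι : Type*} [Finite ι] {x f : ℝ → ι → ℝ} {C : ι → ℝ}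
    {b : ℝ} (hx : ∀ t ∈ Icc 0 b, HasDerivAt x (f t) t)
    (hf : ∀ t ∈ Icc 0 b, ∀ V, (∀ c, -V ≤ x t c) → ∀ a, x t a ≤ 0 → -(C a * V) ≤ f t a)
    (h0 : 0 ≤ x 0) : ∀ t ∈ Icc 0 b, 0 ≤ x t := by
  obtain ⟨K, hK⟩ := (finite_range C).bddAbove
  have hCK : ∀ a, C a < K + 1 := fun a => (hK (mem_range_self a)).trans_lt (lt_add_one K)
  have barrier : ∀ ε > 0, ∀ t ∈ Icc 0 b, ∀ a, -(ε * Real.exp ((K + 1) * t)) < x t a := by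
    intro ε hε
    by_contra! hcross
    obtain ⟨t₀, ht₀, a₀, ha₀⟩ := hcross
    set g : ι → ℝ → ℝ := fun a s => x s a + ε * Real.exp ((K + 1) * s)
    have hg : ∀ a, ∀ s ∈ Icc 0 b, HasDerivAt (g a)
        (f s a + ε * (Real.exp ((K + 1) * s) * (K + 1))) s := fun a s hs =>
      (hasDerivAt_pi.1 (hx s hs) a).add
        (((hasDerivAt_id s).const_mul (K + 1)).exp.const_mul ε |>.congr_deriv (by simp))
    obtain ⟨τ, hτ, a, hga, hgc⟩ := exists_first_nonpos (g := g)
      (fun a s hs => (hg a s hs).continuousAt.continuousWithinAt)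
      (fun a => by simpa [g] using add_pos_of_nonneg_of_pos (h0 a) hε)
      ht₀ (show g a₀ t₀ ≤ 0 by simp only [g]; linarith)
    have hτIcc : τ ∈ Icc 0 b := ⟨hτ.1.le, hτ.2⟩
    have hE : 0 < ε * Real.exp ((K + 1) * τ) := by positivity
    have hfa : -(C a * (ε * Real.exp ((K + 1) * τ))) ≤ f τ a :=
      hf τ hτIcc _ (fun c => by linarith [(hgc c).1]) a (by simp only [g] at hga; linarith)
    have hslope : f τ a + ε * (Real.exp ((K + 1) * τ) * (K + 1)) ≤ 0 :=
      (hg a τ hτIcc).nonpos_of_le_left hτ.1 fun s hs => hga.trans ((hgc a).2 s ⟨hs.1.le, hs.2⟩).le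
    nlinarith [mul_pos (sub_pos.2 (hCK a)) hE]
  intro t ht a
  show (0 : ℝ) ≤ x t a
  refine le_of_forall_pos_lt_add fun η hη => ?_
  have := barrier (η / Real.exp ((K + 1) * t)) (by positivity) t ht a
  rw [div_mul_cancel₀ _ (Real.exp_pos _).ne'] at this
  linarith

theorem nonneg_of_quasipositive {ι : Type*} [Fintype ι] {x f : ℝ → ι → ℝ}
    (hx : ∀ t, 0 ≤ t → HasDerivAt x (f t) t)
    (hf : ∀ B, ∃ C : ι → ℝ, ∀ t, ‖x t‖ ≤ B →
      ∀ V, (∀ c, -V ≤ x t c) → ∀ a, x t a ≤ 0 → -(C a * V) ≤ f t a)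
    (h0 : 0 ≤ x 0) {t : ℝ} (ht : 0 ≤ t) : 0 ≤ x t := by
  obtain ⟨B, hB⟩ := isCompact_Icc.exists_bound_of_continuousOn
    (fun s hs => (hx s hs.1).continuousAt.continuousWithinAt : ContinuousOn x (Icc 0 t))
  obtain ⟨C, hC⟩ := hf B
  exact nonneg_on_Icc_of_quasipositive (fun s hs => hx s hs.1) (fun s hs => hC s (hB s hs)) h0
    t ⟨ht, le_rfl⟩

theorem Finset.neg_sum_mul_le_sum {α : Type*} {s : Finset α} {c y : α → ℝ} {V : ℝ}
    (h : ∀ i ∈ s, -(c i * V) ≤ y i) : -((∑ i ∈ s, c i) * V) ≤ ∑ i ∈ s, y i := by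
  rw [Finset.sum_mul, ← Finset.sum_neg_distrib]
  exact Finset.sum_le_sum h

theorem Finset.sum_le_sum_mul {α : Type*} {s : Finset α} {c y : α → ℝ} {M : ℝ}
    (h : ∀ i ∈ s, y i ≤ c i * M) : ∑ i ∈ s, y i ≤ (∑ i ∈ s, c i) * M := by
  rw [Finset.sum_mul]
  exact Finset.sum_le_sum h

theorem Finset.sum_const_mul_sum_mul_comm {ι κ : Type*} [Fintype ι] [Fintype κ] (c : ℝ)
    (a : ι → ℝ) (g : ι → κ → ℝ) : ∑ j, c * ∑ i, a i * g i j = c * ∑ i, a i * ∑ j, g i j := by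
  rw [← Finset.mul_sum, Finset.sum_comm]
  simp only [Finset.mul_sum]

theorem neg_mul_le_mul_of_neg_le {c y V : ℝ} (hc : 0 ≤ c) (hy : -V ≤ y) : -(c * V) ≤ c * y := by
  simpa using mul_le_mul_of_nonneg_left hy hc

theorem neg_mul_mul_le_mul {A B V y z : ℝ} (hB : 0 ≤ B) (hV : 0 ≤ V)
    (hy : -(A * V) ≤ y) (hy' : y ≤ A * B) (hz : -V ≤ z) (hz' : z ≤ B) :
    -(A * B * V) ≤ y * z := by
  rcases le_total 0 y with hy0 | hy0 <;> rcases le_total 0 z with hz0 | hz0 <;>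
    nlinarith [mul_nonneg hB hV]

theorem mul_le_mul_of_neg_le_of_nonpos {M V y z : ℝ} (hM : 0 ≤ M) (hy : -M ≤ y)
    (hz : -V ≤ z) (hz' : z ≤ 0) : y * z ≤ M * V := by
  rcases le_total 0 y with hy0 | hy0 <;> nlinarith

theorem neg_sum_abs_mul_le_of_metzler_row {ι : Type*} [Fintype ι] {A : Matrix ι ι ℝ} {p : ι}
    {X : ι → ℝ} {V : ℝ} (hA : ∀ l, p ≠ l → 0 ≤ A p l) (hXp : X p ≤ 0) (hX : ∀ l, -V ≤ X l) :
    -((∑ l, |A p l|) * V) ≤ ∑ l, A p l * X l := by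
  refine Finset.neg_sum_mul_le_sum fun l _ => ?_
  rcases eq_or_ne p l with rfl | hl
  · calc -(|A p p| * V) ≤ -(|A p p| * |X p|) :=
          neg_le_neg (mul_le_mul_of_nonneg_left (abs_le.2 ⟨hX p, by linarith [hX p]⟩)
            (abs_nonneg _))
      _ = -|A p p * X p| := by rw [abs_mul]
      _ ≤ A p p * X p := neg_abs_le _
  · rw [abs_of_nonneg (hA l hl)]
    exact neg_mul_le_mul_of_neg_le (hA l hl) (hX l)

abbrev SISIndex (P N : ℕ) := Fin P ⊕ (Fin P × Fin N) ⊕ (Fin P × Fin N × Fin N)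

section SIS

variable {P N : ℕ} (r : Fin P → ℝ) (γ : Fin P → Fin N → ℝ) (γ2 : Fin P → Fin N → Fin N → ℝ)
  (β : Fin P → Fin N → ℝ) (k : Fin P → Fin N → Fin N → ℝ) (q : Fin P → Fin N → Fin N → ℝ)
  (δ : ℝ) (Dm : Matrix (Fin P) (Fin P) ℝ)
  (S : Fin P → ℝ) (I : Fin P → Fin N → ℝ) (Dc : Fin P → Fin N → Fin N → ℝ)

def carriers (p : Fin P) (i : Fin N) : ℝ :=
  I p i + ∑ j, (q p i j * Dc p i j + (1 - q p j i) * Dc p j i)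

def sisState : SISIndex P N → ℝ
  | .inl p => S p
  | .inr (.inl (p, i)) => I p i
  | .inr (.inr (p, i, j)) => Dc p i j

def sisField : SISIndex P N → ℝ
  | .inl p => r p * (1 - S p) + (∑ i, γ p i * I p i) + (∑ i, ∑ j, γ2 p i j * Dc p i j)
      - (∑ i, β p i * carriers q I Dc p i * S p) + δ * ∑ l, Dm p l * S l
  | .inr (.inl (p, i)) => β p i * carriers q I Dc p i * S p - (r p + γ p i) * I p i
      - (∑ j, k p i j * β p i * I p i * carriers q I Dc p j) + δ * ∑ l, Dm p l * I l i
  | .inr (.inr (p, i, j)) => k p i j * β p i * I p i * carriers q I Dc p j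
      - (r p + γ2 p i j) * Dc p i j + δ * ∑ l, Dm p l * Dc l i j

def patchTotal (p : Fin P) : ℝ := S p + ∑ i, I p i + ∑ i, ∑ j, Dc p i j

variable {q S I Dc}

theorem neg_le_carriers (hq : ∀ p i j, q p i j ∈ Icc (0 : ℝ) 1) {W : ℝ} (hW : 0 ≤ W)
    (hI : ∀ p i, -W ≤ I p i) (hD : ∀ p i j, -W ≤ Dc p i j) (p : Fin P) (i : Fin N) :
    -((1 + 2 * N) * W) ≤ carriers q I Dc p i := by
  have hsum : -((∑ _j : Fin N, (2 : ℝ)) * W)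
      ≤ ∑ j, (q p i j * Dc p i j + (1 - q p j i) * Dc p j i) :=
    Finset.neg_sum_mul_le_sum fun j _ => by
      nlinarith [(hq p i j).1, (hq p i j).2, (hq p j i).1, (hq p j i).2, hD p i j, hD p j i]
  simp only [Finset.sum_const, Finset.card_univ, Fintype.card_fin, nsmul_eq_mul] at hsum
  rw [carriers]
  linarith [hI p i]

theorem carriers_le (hq : ∀ p i j, q p i j ∈ Icc (0 : ℝ) 1) {W : ℝ} (hW : 0 ≤ W)
    (hI : ∀ p i, I p i ≤ W) (hD : ∀ p i j, Dc p i j ≤ W) (p : Fin P) (i : Fin N) :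
    carriers q I Dc p i ≤ (1 + 2 * N) * W := by
  have hsum : ∑ j, (q p i j * Dc p i j + (1 - q p j i) * Dc p j i)
      ≤ (∑ _j : Fin N, (2 : ℝ)) * W :=
    Finset.sum_le_sum_mul fun j _ => by
      nlinarith [(hq p i j).1, (hq p i j).2, (hq p j i).1, (hq p j i).2, hD p i j, hD p j i]
  simp only [Finset.sum_const, Finset.card_univ, Fintype.card_fin, nsmul_eq_mul] at hsum
  rw [carriers]
  linarith [hI p i]

variable {r γ γ2 β k δ Dm}

theorem sisField_inl_ge (hr : ∀ p, 0 ≤ r p) (hγ : ∀ p i, 0 ≤ γ p i)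
    (hγ2 : ∀ p i j, 0 ≤ γ2 p i j) (hβ : ∀ p i, 0 ≤ β p i) (hδ : 0 ≤ δ)
    (hDm : ∀ p l, p ≠ l → 0 ≤ Dm p l) {p : Fin P} {V M : ℝ} (hM : 0 ≤ M)
    (hJ : ∀ i, -M ≤ carriers q I Dc p i) (hV : ∀ c, -V ≤ sisState S I Dc c) (hSp : S p ≤ 0) :
    -((∑ i, γ p i + ∑ i, ∑ j, γ2 p i j + (∑ i, β p i) * M + δ * ∑ l, |Dm p l|) * V)
      ≤ sisField r γ γ2 β k q δ Dm S I Dc (.inl p) := by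
  have hrec : 0 ≤ r p * (1 - S p) := mul_nonneg (hr p) (by linarith)
  have hsing : -((∑ i, γ p i) * V) ≤ ∑ i, γ p i * I p i :=
    Finset.neg_sum_mul_le_sum fun i _ => neg_mul_le_mul_of_neg_le (hγ p i) (hV (.inr (.inl (p, i))))
  have hdoub : -((∑ i, ∑ j, γ2 p i j) * V) ≤ ∑ i, ∑ j, γ2 p i j * Dc p i j :=
    Finset.neg_sum_mul_le_sum fun i _ => Finset.neg_sum_mul_le_sum fun j _ =>
      neg_mul_le_mul_of_neg_le (hγ2 p i j) (hV (.inr (.inr (p, i, j))))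
  have hinf : ∑ i, β p i * carriers q I Dc p i * S p ≤ (∑ i, β p i) * (M * V) :=
    Finset.sum_le_sum_mul fun i _ => by
      rw [mul_assoc]
      exact mul_le_mul_of_nonneg_left
        (mul_le_mul_of_neg_le_of_nonpos hM (hJ i) (hV (.inl p)) hSp) (hβ p i)
  have hmig := mul_le_mul_of_nonneg_left
    (neg_sum_abs_mul_le_of_metzler_row (hDm p) hSp fun l => hV (.inl l)) hδ
  simp only [sisField]
  linarith

theorem sisField_inr_inl_ge (hr : ∀ p, 0 ≤ r p) (hγ : ∀ p i, 0 ≤ γ p i)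
    (hβ : ∀ p i, 0 ≤ β p i) (hk : ∀ p i j, 0 ≤ k p i j) (hδ : 0 ≤ δ)
    (hDm : ∀ p l, p ≠ l → 0 ≤ Dm p l) {p : Fin P} {i : Fin N} {V A B : ℝ} (hB : 0 ≤ B)
    (hV0 : 0 ≤ V) (hJV : -(A * V) ≤ carriers q I Dc p i)
    (hJB : ∀ j, |carriers q I Dc p j| ≤ A * B) (hV : ∀ c, -V ≤ sisState S I Dc c)
    (hSB : S p ≤ B) (hIpi : I p i ≤ 0) :
    -((β p i * (A * B) + (∑ j, k p i j * β p i) * (A * B) + δ * ∑ l, |Dm p l|) * V)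
      ≤ sisField r γ γ2 β k q δ Dm S I Dc (.inr (.inl (p, i))) := by
  have hAB : 0 ≤ A * B := (abs_nonneg _).trans (hJB i)
  have hinf : -(β p i * (A * B * V)) ≤ β p i * (carriers q I Dc p i * S p) :=
    neg_mul_le_mul_of_neg_le (hβ p i)
      (neg_mul_mul_le_mul hB hV0 hJV (abs_le.1 (hJB i)).2 (hV (.inl p)) hSB)
  have hrec : (r p + γ p i) * I p i ≤ 0 :=
    mul_nonpos_of_nonneg_of_nonpos (add_nonneg (hr p) (hγ p i)) hIpi
  have hco : ∑ j, k p i j * β p i * I p i * carriers q I Dc p j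
      ≤ (∑ j, k p i j * β p i) * (A * B * V) :=
    Finset.sum_le_sum_mul fun j _ => by
      rw [mul_assoc, mul_comm (I p i)]
      exact mul_le_mul_of_nonneg_left (mul_le_mul_of_neg_le_of_nonpos hAB
        (abs_le.1 (hJB j)).1 (hV (.inr (.inl (p, i)))) hIpi) (mul_nonneg (hk p i j) (hβ p i))
  have hmig := mul_le_mul_of_nonneg_left
    (neg_sum_abs_mul_le_of_metzler_row (X := fun l => I l i) (hDm p) hIpi
      fun l => hV (.inr (.inl (l, i)))) hδ
  simp only [sisField]
  linarith

theorem sisField_inr_inr_ge (hr : ∀ p, 0 ≤ r p) (hγ2 : ∀ p i j, 0 ≤ γ2 p i j)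
    (hβ : ∀ p i, 0 ≤ β p i) (hk : ∀ p i j, 0 ≤ k p i j) (hδ : 0 ≤ δ)
    (hDm : ∀ p l, p ≠ l → 0 ≤ Dm p l) {p : Fin P} {i j : Fin N} {V A B : ℝ} (hB : 0 ≤ B)
    (hV0 : 0 ≤ V) (hJV : -(A * V) ≤ carriers q I Dc p j) (hJB : carriers q I Dc p j ≤ A * B)
    (hV : ∀ c, -V ≤ sisState S I Dc c) (hIB : I p i ≤ B) (hDpij : Dc p i j ≤ 0) :
    -((k p i j * β p i * (A * B) + δ * ∑ l, |Dm p l|) * V)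
      ≤ sisField r γ γ2 β k q δ Dm S I Dc (.inr (.inr (p, i, j))) := by
  have hco : -(k p i j * β p i * (A * B * V))
      ≤ k p i j * β p i * (carriers q I Dc p j * I p i) :=
    neg_mul_le_mul_of_neg_le (mul_nonneg (hk p i j) (hβ p i))
      (neg_mul_mul_le_mul hB hV0 hJV hJB (hV (.inr (.inl (p, i)))) hIB)
  have hrec : (r p + γ2 p i j) * Dc p i j ≤ 0 :=
    mul_nonpos_of_nonneg_of_nonpos (add_nonneg (hr p) (hγ2 p i j)) hDpij
  have hmig := mul_le_mul_of_nonneg_left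
    (neg_sum_abs_mul_le_of_metzler_row (X := fun l => Dc l i j) (hDm p) hDpij
      fun l => hV (.inr (.inr (l, i, j)))) hδ
  simp only [sisField]
  linarith

theorem sisField_quasipositive (hr : ∀ p, 0 ≤ r p) (hγ : ∀ p i, 0 ≤ γ p i)
    (hγ2 : ∀ p i j, 0 ≤ γ2 p i j) (hβ : ∀ p i, 0 ≤ β p i) (hk : ∀ p i j, 0 ≤ k p i j)
    (hq : ∀ p i j, q p i j ∈ Icc (0 : ℝ) 1) (hδ : 0 ≤ δ) (hDm : ∀ p l, p ≠ l → 0 ≤ Dm p l)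
    (B : ℝ) : ∃ C : SISIndex P N → ℝ, ∀ S I Dc, ‖sisState S I Dc‖ ≤ B →
      ∀ V, (∀ c, -V ≤ sisState S I Dc c) → ∀ a, sisState S I Dc a ≤ 0 →
        -(C a * V) ≤ sisField r γ γ2 β k q δ Dm S I Dc a := by
  set A : ℝ := 1 + 2 * N
  refine ⟨fun
    | .inl p => ∑ i, γ p i + ∑ i, ∑ j, γ2 p i j + (∑ i, β p i) * (A * B)
        + δ * ∑ l, |Dm p l|
    | .inr (.inl (p, i)) => β p i * (A * B) + (∑ j, k p i j * β p i) * (A * B)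
        + δ * ∑ l, |Dm p l|
    | .inr (.inr (p, i, j)) => k p i j * β p i * (A * B) + δ * ∑ l, |Dm p l|, ?_⟩
  intro S I Dc hB V hV a ha
  have hV0 : 0 ≤ V := by linarith [hV a]
  have hB0 : 0 ≤ B := (norm_nonneg _).trans hB
  have hx : ∀ c, -B ≤ sisState S I Dc c ∧ sisState S I Dc c ≤ B := fun c =>
    abs_le.1 ((norm_le_pi_norm _ c).trans hB)
  have hJV : ∀ p i, -(A * V) ≤ carriers q I Dc p i := neg_le_carriers hq hV0
    (fun p i => hV (.inr (.inl (p, i)))) (fun p i j => hV (.inr (.inr (p, i, j))))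
  have hJB : ∀ p i, |carriers q I Dc p i| ≤ A * B := fun p i => abs_le.2
    ⟨neg_le_carriers hq hB0 (fun p i => (hx (.inr (.inl (p, i)))).1)
      (fun p i j => (hx (.inr (.inr (p, i, j)))).1) p i,
    carriers_le hq hB0 (fun p i => (hx (.inr (.inl (p, i)))).2)
      (fun p i j => (hx (.inr (.inr (p, i, j)))).2) p i⟩
  rcases a with p | ⟨p, i⟩ | ⟨p, i, j⟩
  · exact sisField_inl_ge hr hγ hγ2 hβ hδ hDm (by positivity)
      (fun i => (abs_le.1 (hJB p i)).1) hV ha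
  · exact sisField_inr_inl_ge hr hγ hβ hk hδ hDm hB0 hV0 (hJV p i) (hJB p) hV (hx (.inl p)).2 ha
  · exact sisField_inr_inr_ge hr hγ2 hβ hk hδ hDm hB0 hV0 (hJV p j) (abs_le.1 (hJB p j)).2 hV
      (hx (.inr (.inl (p, i)))).2 ha

theorem sisField_patch_sum (p : Fin P) :
    sisField r γ γ2 β k q δ Dm S I Dc (.inl p)
      + ∑ i, sisField r γ γ2 β k q δ Dm S I Dc (.inr (.inl (p, i)))
      + ∑ i, ∑ j, sisField r γ γ2 β k q δ Dm S I Dc (.inr (.inr (p, i, j)))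
      = r p * (1 - patchTotal S I Dc p) + δ * ∑ l, Dm p l * patchTotal S I Dc l := by
  simp only [sisField, patchTotal, Finset.sum_add_distrib, Finset.sum_sub_distrib,
    Finset.sum_const_mul_sum_mul_comm]
  simp only [add_mul, mul_add, Finset.sum_add_distrib, ← Finset.mul_sum]
  ring

theorem patchTotal_eq_one (hrow : ∀ p, ∑ l, Dm p l = 0) {S : ℝ → Fin P → ℝ}
    {I : ℝ → Fin P → Fin N → ℝ} {Dc : ℝ → Fin P → Fin N → Fin N → ℝ}
    (hx : ∀ t, 0 ≤ t → HasDerivAt (fun s => sisState (S s) (I s) (Dc s))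
      (sisField r γ γ2 β k q δ Dm (S t) (I t) (Dc t)) t)
    (h0 : patchTotal (S 0) (I 0) (Dc 0) = 1) {t : ℝ} (ht : 0 ≤ t) :
    patchTotal (S t) (I t) (Dc t) = 1 := by
  set v : (Fin P → ℝ) → Fin P → ℝ := fun y p => r p * (1 - y p) + δ * ∑ l, Dm p l * y l
  have hv : ∃ K, LipschitzWith K v := by
    let L := LinearMap.toContinuousLinearMap (Matrix.toLin' (δ • Dm - Matrix.diagonal r))
    have hvL : v = fun y => r + L y := by
      ext y p
      simp only [v, L, LinearMap.coe_toContinuousLinearMap', Matrix.toLin'_apply, Pi.add_apply,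
        Matrix.mulVec, dotProduct, Matrix.sub_apply, Matrix.smul_apply, Matrix.diagonal_apply,
        smul_eq_mul, sub_mul, ite_mul, zero_mul, Finset.sum_sub_distrib, Finset.sum_ite_eq,
        Finset.mem_univ, if_true, Finset.mul_sum, mul_assoc]
      ring
    exact ⟨_, hvL ▸ (LipschitzWith.const r).add L.lipschitz⟩
  obtain ⟨K, hK⟩ := hv
  have hT : ∀ s, 0 ≤ s → HasDerivAt (fun s => patchTotal (S s) (I s) (Dc s))
      (v (patchTotal (S s) (I s) (Dc s))) s := by
    intro s hs
    have hc := hasDerivAt_pi.1 (hx s hs)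
    refine hasDerivAt_pi.2 fun p => ?_
    show HasDerivAt (fun s => patchTotal (S s) (I s) (Dc s) p)
      (r p * (1 - patchTotal (S s) (I s) (Dc s) p)
        + δ * ∑ l, Dm p l * patchTotal (S s) (I s) (Dc s) l) s
    rw [← sisField_patch_sum]
    exact ((hc (.inl p)).add
      (HasDerivAt.fun_sum (u := .univ) fun i _ => hc (.inr (.inl (p, i))))).add
      (HasDerivAt.fun_sum (u := .univ) fun i _ =>
        HasDerivAt.fun_sum (u := .univ) fun j _ => hc (.inr (.inr (p, i, j))))
  have hv1 : v 1 = 0 := by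
    ext p
    simp [v, hrow]
  have h1 : ∀ s, HasDerivAt (fun _ : ℝ => (1 : Fin P → ℝ)) (v 1) s :=
    fun s => hv1 ▸ hasDerivAt_const s _
  exact ODE_solution_unique (v := fun _ => v) (fun _ => hK)
    (fun s hs => (hT s hs.1).continuousAt.continuousWithinAt)
    (fun s hs => (hT s hs.1).hasDerivWithinAt) continuousOn_const
    (fun s _ => (h1 s).hasDerivWithinAt) h0 ⟨ht, le_rfl⟩

theorem mem_Icc_of_nonneg_of_patchTotal_eq_one (hx : 0 ≤ sisState S I Dc)
    (hT : patchTotal S I Dc = 1) :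
    (∀ p, S p ∈ Icc (0 : ℝ) 1) ∧ (∀ p i, I p i ∈ Icc (0 : ℝ) 1)
      ∧ (∀ p i j, Dc p i j ∈ Icc (0 : ℝ) 1) := by
  have hS : ∀ p, 0 ≤ S p := fun p => hx (.inl p)
  have hI : ∀ p i, 0 ≤ I p i := fun p i => hx (.inr (.inl (p, i)))
  have hD : ∀ p i j, 0 ≤ Dc p i j := fun p i j => hx (.inr (.inr (p, i, j)))
  have hIsum : ∀ p i, I p i ≤ ∑ i, I p i := fun p i =>
    Finset.single_le_sum (fun i _ => hI p i) (Finset.mem_univ i)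
  have hDsum : ∀ p i j, Dc p i j ≤ ∑ i, ∑ j, Dc p i j := fun p i j =>
    (Finset.single_le_sum (fun j _ => hD p i j) (Finset.mem_univ j)).trans
      (Finset.single_le_sum (f := fun i => ∑ j, Dc p i j)
        (fun i _ => Finset.sum_nonneg fun j _ => hD p i j) (Finset.mem_univ i))
  have hT : ∀ p, S p + ∑ i, I p i + ∑ i, ∑ j, Dc p i j = 1 := fun p => congrFun hT p
  have hIsum0 : ∀ p, 0 ≤ ∑ i, I p i := fun p => Finset.sum_nonneg fun i _ => hI p i
  have hDsum0 : ∀ p, 0 ≤ ∑ i, ∑ j, Dc p i j := fun p =>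
    Finset.sum_nonneg fun i _ => Finset.sum_nonneg fun j _ => hD p i j
  refine ⟨fun p => ⟨hS p, ?_⟩, fun p i => ⟨hI p i, ?_⟩, fun p i j => ⟨hD p i j, ?_⟩⟩
  · linarith [hT p, hIsum0 p, hDsum0 p]
  · linarith [hT p, hS p, hIsum p i, hDsum0 p]
  · linarith [hT p, hS p, hIsum0 p, hDsum p i j]

end SIS

theorem sis_omega_positively_invariant_general
    (P N : ℕ)
    (r : Fin P → ℝ) (hr : ∀ p, 0 < r p)
    (γ : Fin P → Fin N → ℝ) (hγ : ∀ p i, 0 ≤ γ p i)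
    (γ2 : Fin P → Fin N → Fin N → ℝ) (hγ2 : ∀ p i j, 0 ≤ γ2 p i j)
    (β : Fin P → Fin N → ℝ) (hβ : ∀ p i, 0 ≤ β p i)
    (k : Fin P → Fin N → Fin N → ℝ) (hk : ∀ p i j, 0 ≤ k p i j)
    (q : Fin P → Fin N → Fin N → ℝ) (hq : ∀ p i j, q p i j ∈ Set.Icc (0:ℝ) 1)
    (δ : ℝ) (hδ : 0 ≤ δ)
    (Dm : Matrix (Fin P) (Fin P) ℝ)
    (hMetzler : ∀ p l, p ≠ l → 0 ≤ Dm p l)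
    (hrow : ∀ p, ∑ l, Dm p l = 0)
    (S : ℝ → Fin P → ℝ)
    (I : ℝ → Fin P → Fin N → ℝ)
    (Dc : ℝ → Fin P → Fin N → Fin N → ℝ)
    (J : ℝ → Fin P → Fin N → ℝ)
    (hJ : ∀ t p i, J t p i
      = I t p i + ∑ j, (q p i j * Dc t p i j + (1 - q p j i) * Dc t p j i))
    (hS : ∀ t, 0 ≤ t → ∀ p, HasDerivAt (fun s => S s p)
      (r p * (1 - S t p) + (∑ i, γ p i * I t p i)
        + (∑ i, ∑ j, γ2 p i j * Dc t p i j)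
        - (∑ i, β p i * J t p i * S t p)
        + δ * ∑ l, Dm p l * S t l) t)
    (hI : ∀ t, 0 ≤ t → ∀ p i, HasDerivAt (fun s => I s p i)
      (β p i * J t p i * S t p - (r p + γ p i) * I t p i
        - (∑ j, k p i j * β p i * I t p i * J t p j)
        + δ * ∑ l, Dm p l * I t l i) t)
    (hD : ∀ t, 0 ≤ t → ∀ p i j, HasDerivAt (fun s => Dc s p i j)
      (k p i j * β p i * I t p i * J t p j
        - (r p + γ2 p i j) * Dc t p i j
        + δ * ∑ l, Dm p l * Dc t l i j) t)
    (hinit : (∀ p, S 0 p ∈ Set.Icc (0:ℝ) 1)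
      ∧ (∀ p i, I 0 p i ∈ Set.Icc (0:ℝ) 1)
      ∧ (∀ p i j, Dc 0 p i j ∈ Set.Icc (0:ℝ) 1)
      ∧ (∀ p, S 0 p + (∑ i, I 0 p i) + (∑ i, ∑ j, Dc 0 p i j) = 1)) :
    ∀ t, 0 ≤ t →
      (∀ p, S t p ∈ Set.Icc (0:ℝ) 1)
      ∧ (∀ p i, I t p i ∈ Set.Icc (0:ℝ) 1)
      ∧ (∀ p i j, Dc t p i j ∈ Set.Icc (0:ℝ) 1)
      ∧ (∀ p, S t p + (∑ i, I t p i) + (∑ i, ∑ j, Dc t p i j) = 1) := by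
  obtain rfl : J = fun t => carriers q (I t) (Dc t) := funext fun t => funext fun p =>
    funext fun i => hJ t p i
  obtain ⟨hS0, hI0, hD0, hT0⟩ := hinit
  have hx : ∀ t, 0 ≤ t → HasDerivAt (fun s => sisState (S s) (I s) (Dc s))
      (sisField r γ γ2 β k q δ Dm (S t) (I t) (Dc t)) t := fun t ht => hasDerivAt_pi.2 fun
    | .inl p => hS t ht p
    | .inr (.inl (p, i)) => hI t ht p i
    | .inr (.inr (p, i, j)) => hD t ht p i j
  have hx0 : 0 ≤ sisState (S 0) (I 0) (Dc 0) := fun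
    | .inl p => (hS0 p).1
    | .inr (.inl (p, i)) => (hI0 p i).1
    | .inr (.inr (p, i, j)) => (hD0 p i j).1
  intro t ht
  have htotal := patchTotal_eq_one hrow hx (funext hT0) ht
  have hnonneg := nonneg_of_quasipositive hx (fun B =>
    (sisField_quasipositive (fun p => (hr p).le) hγ hγ2 hβ hk hq hδ hMetzler B).imp
      fun _ hC s hB => hC _ _ _ hB) hx0 ht
  obtain ⟨hS, hI, hD⟩ := mem_Icc_of_nonneg_of_patchTotal_eq_one hnonneg htotal
  exact ⟨hS, hI, hD, congrFun htotal⟩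

/-- Positivity invariance of the set `Ω` (all coordinates in `[0,1]`,
per-patch total equal to `1`) for the SIS co-colonization system (★) with `P` patches
and `N` strains, when the connectivity matrix is Metzler with zero row sums. -/
theorem sis_omega_positively_invariant
    (P N : ℕ) (hP : 1 ≤ P) (hN : 1 ≤ N)
    (r : Fin P → ℝ) (hr : ∀ p, 0 < r p)
    (γ : Fin P → Fin N → ℝ) (hγ : ∀ p i, 0 ≤ γ p i)
    (γ2 : Fin P → Fin N → Fin N → ℝ) (hγ2 : ∀ p i j, 0 ≤ γ2 p i j)
    (β : Fin P → Fin N → ℝ) (hβ : ∀ p i, 0 ≤ β p i)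
    (k : Fin P → Fin N → Fin N → ℝ) (hk : ∀ p i j, 0 ≤ k p i j)
    (q : Fin P → Fin N → Fin N → ℝ) (hq : ∀ p i j, q p i j ∈ Set.Icc (0:ℝ) 1)
    (δ : ℝ) (hδ : 0 ≤ δ)
    (Dm : Matrix (Fin P) (Fin P) ℝ)
    (hMetzler : ∀ p l, p ≠ l → 0 ≤ Dm p l)
    (hrow : ∀ p, ∑ l, Dm p l = 0)
    (S : ℝ → Fin P → ℝ)
    (I : ℝ → Fin P → Fin N → ℝ)
    (Dc : ℝ → Fin P → Fin N → Fin N → ℝ)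
    (J : ℝ → Fin P → Fin N → ℝ)
    (hJ : ∀ t p i, J t p i
      = I t p i + ∑ j, (q p i j * Dc t p i j + (1 - q p j i) * Dc t p j i))
    (hS : ∀ t, 0 ≤ t → ∀ p, HasDerivAt (fun s => S s p)
      (r p * (1 - S t p) + (∑ i, γ p i * I t p i)
        + (∑ i, ∑ j, γ2 p i j * Dc t p i j)
        - (∑ i, β p i * J t p i * S t p)
        + δ * ∑ l, Dm p l * S t l) t)
    (hI : ∀ t, 0 ≤ t → ∀ p i, HasDerivAt (fun s => I s p i)
      (β p i * J t p i * S t p - (r p + γ p i) * I t p i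
        - (∑ j, k p i j * β p i * I t p i * J t p j)
        + δ * ∑ l, Dm p l * I t l i) t)
    (hD : ∀ t, 0 ≤ t → ∀ p i j, HasDerivAt (fun s => Dc s p i j)
      (k p i j * β p i * I t p i * J t p j
        - (r p + γ2 p i j) * Dc t p i j
        + δ * ∑ l, Dm p l * Dc t l i j) t)
    (hinit : (∀ p, S 0 p ∈ Set.Icc (0:ℝ) 1)
      ∧ (∀ p i, I 0 p i ∈ Set.Icc (0:ℝ) 1)
      ∧ (∀ p i j, Dc 0 p i j ∈ Set.Icc (0:ℝ) 1)
      ∧ (∀ p, S 0 p + (∑ i, I 0 p i) + (∑ i, ∑ j, Dc 0 p i j) = 1)) :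
    ∀ t, 0 ≤ t →
      (∀ p, S t p ∈ Set.Icc (0:ℝ) 1)
      ∧ (∀ p i, I t p i ∈ Set.Icc (0:ℝ) 1)
      ∧ (∀ p i j, Dc t p i j ∈ Set.Icc (0:ℝ) 1)
      ∧ (∀ p, S t p + (∑ i, I t p i) + (∑ i, ∑ j, Dc t p i j) = 1) :=
  sis_omega_positively_invariant_general P N r hr γ hγ γ2 hγ2 β hβ k hk q hq δ hδ Dm hMetzler hrow S
    I Dc J hJ hS hI hD hinit
end

section
/- For the single-patch single-strain SIS system with coinfection: if β ≤ r + γ, then every solution (S(t), I(t), D(t)) with initial data in Υ satisfies lim_{t→+∞}(S(t), I(t), D(t)) = (1, 0, 0). -/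
/-!
Adding the three equations shows that `S + I + D - 1` solves `x' = -r x`, so the total
population stays `1` and `S = 1 - J` with `J = I + D`. Then `J` solves the logistic-type equation
`J' = -((r + γ - β) + β J) J`, whose coefficient is nonnegative when `β ≤ r + γ`: `J` stays
nonnegative, decreases, and its derivative is bounded away from zero as long as `J` stays
above a fixed level, so `J → 0`. Finally `I` and `D` are nonnegative (each satisfies a linear
differential inequality `x' ≥ a(t) x`) and squeezed between `0` and `J`.
-/

open Set Filter Topology

lemma monotoneOn_Ici_of_hasDerivAt_nonneg {f f' : ℝ → ℝ} {a : ℝ}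
    (hf : ∀ t, a ≤ t → HasDerivAt f (f' t) t) (hf' : ∀ t, a ≤ t → 0 ≤ f' t) :
    MonotoneOn f (Ici a) := by
  refine monotoneOn_of_hasDerivWithinAt_nonneg (f' := f') (convex_Ici a)
    (fun t ht => (hf t ht).continuousAt.continuousWithinAt) (fun t ht => ?_) (fun t ht => ?_)
  all_goals rw [interior_Ici] at ht
  · exact (hf t ht.le).hasDerivWithinAt
  · exact hf' t ht.le

lemma antitoneOn_Ici_of_hasDerivAt_nonpos {f f' : ℝ → ℝ} {a : ℝ}
    (hf : ∀ t, a ≤ t → HasDerivAt f (f' t) t) (hf' : ∀ t, a ≤ t → f' t ≤ 0) :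
    AntitoneOn f (Ici a) := by
  refine antitoneOn_of_hasDerivWithinAt_nonpos (f' := f') (convex_Ici a)
    (fun t ht => (hf t ht).continuousAt.continuousWithinAt) (fun t ht => ?_) (fun t ht => ?_)
  all_goals rw [interior_Ici] at ht
  · exact (hf t ht.le).hasDerivWithinAt
  · exact hf' t ht.le

lemma continuousOn_Ici_of_hasDerivAt {f f' : ℝ → ℝ} {a : ℝ}
    (hf : ∀ t, a ≤ t → HasDerivAt f (f' t) t) : ContinuousOn f (Ici a) :=
  fun t ht => (hf t ht).continuousAt.continuousWithinAt

/-- The integrating factor `exp (-∫₀ᵗ a)` turns `f' ≥ a f` into monotonicity. -/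
theorem nonneg_of_mul_le_hasDerivAt {f f' a : ℝ → ℝ} (ha : ContinuousOn a (Ici 0))
    (hf : ∀ t, 0 ≤ t → HasDerivAt f (f' t) t) (hle : ∀ t, 0 ≤ t → a t * f t ≤ f' t)
    (h0 : 0 ≤ f 0) {t : ℝ} (ht : 0 ≤ t) : 0 ≤ f t := by
  have ha' : Continuous fun s => a (max s 0) :=
    ha.comp_continuous (continuous_id.max continuous_const) fun s => le_max_right s 0
  set A : ℝ → ℝ := fun u => ∫ s in (0:ℝ)..u, a (max s 0)
  have hA : ∀ u, 0 ≤ u → HasDerivAt A (a u) u := fun u hu => by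
    simpa [max_eq_left hu] using (ha'.integral_hasStrictDerivAt 0 u).hasDerivAt
  have hmono : MonotoneOn (fun u => f u * Real.exp (-A u)) (Ici 0) :=
    monotoneOn_Ici_of_hasDerivAt_nonneg (fun u hu => (hf u hu).mul (hA u hu).fun_neg.exp)
      fun u hu => (mul_nonneg (sub_nonneg.2 (hle u hu)) (Real.exp_pos (-A u)).le).trans_eq
        (by ring)
  have hft : f 0 ≤ f t * Real.exp (-A t) := by
    simpa [A] using hmono self_mem_Ici ht ht
  exact (mul_nonneg_iff_of_pos_right (Real.exp_pos _)).1 (h0.trans hft)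

theorem eq_zero_of_hasDerivAt_eq_mul {f a : ℝ → ℝ} (ha : ContinuousOn a (Ici 0))
    (hf : ∀ t, 0 ≤ t → HasDerivAt f (a t * f t) t) (h0 : f 0 = 0) {t : ℝ} (ht : 0 ≤ t) :
    f t = 0 := by
  have hneg : 0 ≤ -f t :=
    nonneg_of_mul_le_hasDerivAt ha (fun s hs => (hf s hs).fun_neg) (fun s _ => by simp)
      (by simp [h0]) ht
  exact le_antisymm (by linarith) (nonneg_of_mul_le_hasDerivAt ha hf (fun _ _ => le_rfl) h0.ge ht)

theorem tendsto_zero_of_hasDerivAt_le_neg {f f' : ℝ → ℝ}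
    (hf : ∀ t, 0 ≤ t → HasDerivAt f (f' t) t) (hnonneg : ∀ t, 0 ≤ t → 0 ≤ f t)
    (hanti : AntitoneOn f (Ici 0))
    (hdecay : ∀ ε > 0, ∃ δ > 0, ∀ t, 0 ≤ t → ε ≤ f t → f' t ≤ -δ) :
    Tendsto f atTop (𝓝 0) := by
  refine tendsto_order.2 ⟨fun b hb => ?_, fun ε hε => ?_⟩
  · filter_upwards [eventually_ge_atTop 0] with t ht using hb.trans_le (hnonneg t ht)
  obtain ⟨T, hT, hfT⟩ : ∃ T, 0 ≤ T ∧ f T < ε := by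
    by_contra! hbig
    obtain ⟨δ, hδ, hδf⟩ := hdecay ε hε
    have hlin : AntitoneOn (fun t => f t + δ * t) (Ici 0) :=
      antitoneOn_Ici_of_hasDerivAt_nonpos
        (fun t ht => (hf t ht).add ((hasDerivAt_id t).const_mul δ))
        fun t ht => by linarith [hδf t ht (hbig t ht)]
    have hT : 0 ≤ f 0 / δ + 1 := by have := hnonneg 0 le_rfl; positivity
    have hfT := hlin self_mem_Ici hT hT
    have hδT : δ * (f 0 / δ + 1) = f 0 + δ := by field_simp
    simp only [mul_zero, add_zero, hδT] at hfT
    linarith [hbig _ hT]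
  filter_upwards [eventually_ge_atTop T] with t ht
  exact (hanti hT (hT.trans ht) ht).trans_lt hfT

section Logistic

variable {f : ℝ → ℝ} {μ β : ℝ}
  (hf : ∀ t, 0 ≤ t → HasDerivAt f (-(μ + β * f t) * f t) t)
include hf

theorem logistic_nonneg (h0 : 0 ≤ f 0) {t : ℝ} (ht : 0 ≤ t) : 0 ≤ f t :=
  nonneg_of_mul_le_hasDerivAt (a := fun s => -(μ + β * f s))
    (by have := continuousOn_Ici_of_hasDerivAt hf; fun_prop) hf (fun _ _ => le_rfl) h0 ht

theorem logistic_antitoneOn (hμ : 0 ≤ μ) (hβ : 0 ≤ β) (h0 : 0 ≤ f 0) :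
    AntitoneOn f (Ici 0) :=
  antitoneOn_Ici_of_hasDerivAt_nonpos hf fun t ht => by
    have := logistic_nonneg hf h0 ht
    rw [neg_mul, neg_nonpos]
    positivity

theorem logistic_tendsto_zero (hμ : 0 ≤ μ) (hβ : 0 ≤ β) (hμβ : 0 < μ + β) (h0 : 0 ≤ f 0) :
    Tendsto f atTop (𝓝 0) := by
  refine tendsto_zero_of_hasDerivAt_le_neg hf (fun t ht => logistic_nonneg hf h0 ht)
    (logistic_antitoneOn hf hμ hβ h0) fun ε hε => ⟨(μ + β * ε) * ε, ?_, fun t ht hεt => ?_⟩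
  · have : 0 < μ + β * ε := by
      rcases hμ.eq_or_lt with rfl | hμ
      · have : 0 < β := by linarith
        positivity
      · positivity
    positivity
  · rw [neg_mul, neg_le_neg_iff]
    have := add_nonneg hμ (mul_nonneg hβ (hε.le.trans hεt))
    gcongr

end Logistic

theorem tendsto_one_zero_zero_of_tendsto_add {S I D : ℝ → ℝ}
    (hS : ∀ᶠ t in atTop, S t = 1 - (I t + D t)) (hI : ∀ᶠ t in atTop, 0 ≤ I t)
    (hD : ∀ᶠ t in atTop, 0 ≤ D t) (hJ : Tendsto (fun t => I t + D t) atTop (𝓝 0)) :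
    Tendsto (fun t => (S t, I t, D t)) atTop (𝓝 (1, 0, 0)) := by
  refine Tendsto.prodMk_nhds ?_ (Tendsto.prodMk_nhds ?_ ?_)
  · simpa using (tendsto_const_nhds.sub hJ).congr' (hS.mono fun t ht => ht.symm)
  · refine squeeze_zero' hI ?_ hJ
    filter_upwards [hD] with t ht using by linarith
  · refine squeeze_zero' hD ?_ hJ
    filter_upwards [hI] with t ht using by linarith

/-- For the single-patch single-strain SIS system with coinfection, if
`β ≤ r + γ` then every solution with initial data in `Υ` converges to `(1,0,0)`. -/
theorem sis_single_strain_subcritical_extinction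
    (r γ β k : ℝ) (hr : 0 < r) (hγ : 0 ≤ γ) (hβ : 0 ≤ β) (hk : 0 ≤ k)
    (S I D : ℝ → ℝ)
    (hS : ∀ t, 0 ≤ t → HasDerivAt S
      (r * (1 - S t) + γ * I t + γ * D t - β * (I t + D t) * S t) t)
    (hI : ∀ t, 0 ≤ t → HasDerivAt I
      (β * (I t + D t) * S t - (r + γ) * I t - k * β * I t * (I t + D t)) t)
    (hD : ∀ t, 0 ≤ t → HasDerivAt D
      (k * β * I t * (I t + D t) - (r + γ) * D t) t)
    (hinit : S 0 ∈ Set.Icc (0:ℝ) 1 ∧ I 0 ∈ Set.Icc (0:ℝ) 1 ∧ D 0 ∈ Set.Icc (0:ℝ) 1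
      ∧ S 0 + I 0 + D 0 = 1)
    (hsub : β ≤ r + γ) :
    Filter.Tendsto (fun t => (S t, I t, D t)) Filter.atTop
      (nhds ((1:ℝ), (0:ℝ), (0:ℝ))) := by
  obtain ⟨⟨hS0, -⟩, ⟨hI0, -⟩, ⟨hD0, -⟩, hN0⟩ := hinit
  have hSJ : ∀ t, 0 ≤ t → S t = 1 - (I t + D t) := fun t ht => by
    have := eq_zero_of_hasDerivAt_eq_mul (f := fun u => S u + I u + D u - 1)
      (a := fun _ => -r) continuousOn_const
      (fun u hu => ((((hS u hu).add (hI u hu)).add (hD u hu)).sub_const 1).congr_deriv (by ring))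
      (by simp [hN0]) ht
    linarith
  have hJ : ∀ t, 0 ≤ t → HasDerivAt (fun u => I u + D u)
      (-((r + γ - β) + β * (I t + D t)) * (I t + D t)) t := fun t ht =>
    ((hI t ht).add (hD t ht)).congr_deriv (by rw [hSJ t ht]; ring)
  have hμ : 0 ≤ r + γ - β := by linarith
  have hJ0 : 0 ≤ I 0 + D 0 := by linarith
  have hJnonneg := fun t (ht : 0 ≤ t) => logistic_nonneg hJ hJ0 ht
  have hSnonneg : ∀ t, 0 ≤ t → 0 ≤ S t := fun t ht => by
    linarith [hSJ t ht, hSJ 0 le_rfl, logistic_antitoneOn hJ hμ hβ hJ0 self_mem_Ici ht ht]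
  have hInonneg : ∀ t, 0 ≤ t → 0 ≤ I t :=
    fun t ht => nonneg_of_mul_le_hasDerivAt (a := fun s => -(r + γ) - k * β * (I s + D s))
      (by have := continuousOn_Ici_of_hasDerivAt hJ; fun_prop) hI
      (fun s hs => by nlinarith [mul_nonneg (mul_nonneg hβ (hJnonneg s hs)) (hSnonneg s hs)])
      hI0 ht
  have hDnonneg : ∀ t, 0 ≤ t → 0 ≤ D t :=
    fun t ht => nonneg_of_mul_le_hasDerivAt (a := fun _ => -(r + γ)) continuousOn_const hD
      (fun s hs => by
        nlinarith [mul_nonneg (mul_nonneg (mul_nonneg hk hβ) (hInonneg s hs)) (hJnonneg s hs)])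
      hD0 ht
  have hpos := eventually_ge_atTop (0:ℝ)
  exact tendsto_one_zero_zero_of_tendsto_add (hpos.mono hSJ) (hpos.mono hInonneg) (hpos.mono hDnonneg)
    (logistic_tendsto_zero hJ hμ hβ (by linarith) hJ0)
end

section
/- For the single-patch single-strain SIS system with coinfection: if β > r + γ, then every solution (S(t), I(t), D(t)) with initial data in Υ₀ converges to the endemic equilibrium (S*, I*, D*), and the convergence is exponential: there exist M > 0 and μ > 0 such that for all t ≥ 0, |S(t) − S*| + |I(t) − I*| + |D(t) − D*| ≤ M e^{−μt}. -/
/-!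
The total population `N = S + I + D` obeys `N' = r (1 - N)`, so it stays `1`, and then
the infected mass `T = I + D` follows the logistic law `T' = T (a - β T)` with
`a = β - (r + γ) > 0`. As `1 / T` solves a linear equation, `T → T* = a / β` like `e^{-a t}` as
soon as `T(0) > 0`, which is what excluding the disease-free state guarantees. The error `e = I - I*` then solves
`e' = -(r + γ + k β T) e + g` with `|g| ≤ β (1 + k) |T - T*|`, and a barrier `M e^{-μ t}` with
`μ < r + γ`, `μ ≤ a` traps it. Finally `S - S* = -(T - T*)` and `D - D* = (T - T*) - (I - I*)`.
-/

open Set Real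

theorem eq_mul_exp_of_hasDerivAt {f : ℝ → ℝ} {a : ℝ}
    (hf : ∀ t, 0 ≤ t → HasDerivAt f (a * f t) t) {t : ℝ} (ht : 0 ≤ t) :
    f t = f 0 * exp (a * t) := by
  have hderiv : ∀ s, 0 ≤ s → HasDerivAt (fun s => f s * exp (-a * s)) 0 s := fun s hs =>
    ((hf s hs).mul (hasDerivAt_const_mul (-a)).exp).congr_deriv (by ring)
  have hconst := constant_of_has_deriv_right_zero
    (fun s hs => (hderiv s hs.1).continuousAt.continuousWithinAt)
    (fun s hs => (hderiv s hs.1).hasDerivWithinAt) t ⟨ht, le_rfl⟩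
  rw [mul_zero, exp_zero, mul_one] at hconst
  rw [← hconst, mul_assoc, ← exp_add]
  simp

theorem pos_of_hasDerivAt_eq_mul {f h : ℝ → ℝ} (hh : ContinuousOn h (Ici 0))
    (hf : ∀ t, 0 ≤ t → HasDerivAt f (h t * f t) t) (h0 : 0 < f 0) {t : ℝ} (ht : 0 ≤ t) :
    0 < f t := by
  obtain ⟨L, hL⟩ := isCompact_Icc.exists_bound_of_continuousOn
    (hh.mono (Icc_subset_Ici_self : Icc 0 t ⊆ Ici 0))
  set B : ℝ → ℝ := fun s => f 0 * exp (-(L + 1) * s)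
  have hB : ∀ s, HasDerivAt (fun s => -B s) ((L + 1) * B s) s := fun s =>
    ((hasDerivAt_const_mul (-(L + 1))).exp.const_mul (f 0)).neg.congr_deriv (by ring)
  -- `f` cannot reach the barrier `B`, which decays faster than `|h| ≤ L` allows `f` to
  have hBf : -f t ≤ -B t := image_le_of_deriv_right_lt_deriv_boundary
    (fun s hs => (hf s hs.1).continuousAt.neg.continuousWithinAt)
    (fun s hs => (hf s hs.1).neg.hasDerivWithinAt) (by simp [B]) hB
    (fun s hs hfB => by
      have hBs : 0 < B s := by positivity
      have hhs := (abs_le.1 (hL s (Ico_subset_Icc_self hs))).1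
      rw [neg_inj.1 hfB]
      nlinarith) ⟨ht, le_rfl⟩
  have : 0 < B t := by positivity
  linarith

theorem le_mul_exp_of_hasDerivAt_eq_neg_mul_add {f c g : ℝ → ℝ} {ρ μ K M : ℝ}
    (hf : ∀ t, 0 ≤ t → HasDerivAt f (-c t * f t + g t) t)
    (hc : ∀ t, 0 ≤ t → ρ ≤ c t) (hg : ∀ t, 0 ≤ t → g t ≤ K * exp (-μ * t))
    (hM : 0 ≤ M) (hKM : K < (ρ - μ) * M) (h0 : f 0 ≤ M) {t : ℝ} (ht : 0 ≤ t) :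
    f t ≤ M * exp (-μ * t) := by
  have hB : ∀ s, HasDerivAt (fun s => M * exp (-μ * s)) (-μ * (M * exp (-μ * s))) s :=
    fun s => ((hasDerivAt_const_mul (-μ)).exp.const_mul M).congr_deriv (by ring)
  -- where `f` touches the barrier, `f' ≤ (K - ρ M) e^{-μ s} < -μ M e^{-μ s}`
  refine image_le_of_deriv_right_lt_deriv_boundary
    (fun s hs => (hf s hs.1).continuousAt.continuousWithinAt)
    (fun s hs => (hf s hs.1).hasDerivWithinAt) (by simpa using h0) hB
    (fun s hs hfB => ?_) ⟨ht, le_rfl⟩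
  have hE := exp_pos (-μ * s)
  have hcB := mul_le_mul_of_nonneg_right (hc s hs.1) (mul_nonneg hM hE.le)
  have hKE := mul_lt_mul_of_pos_right hKM hE
  rw [hfB]
  nlinarith [hg s hs.1]

theorem exists_abs_le_mul_exp_of_hasDerivAt_eq_neg_mul_add {f c g : ℝ → ℝ} {ρ μ K : ℝ}
    (hf : ∀ t, 0 ≤ t → HasDerivAt f (-c t * f t + g t) t)
    (hc : ∀ t, 0 ≤ t → ρ ≤ c t) (hg : ∀ t, 0 ≤ t → |g t| ≤ K * exp (-μ * t)) (hμ : μ < ρ) :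
    ∃ M > 0, ∀ t, 0 ≤ t → |f t| ≤ M * exp (-μ * t) := by
  have hK : 0 ≤ K := by simpa using (abs_nonneg _).trans (hg 0 le_rfl)
  have hρμ : 0 < ρ - μ := sub_pos.2 hμ
  set M := |f 0| + K / (ρ - μ) + 1
  have hKM : K < (ρ - μ) * M := by
    have : (ρ - μ) * M = (ρ - μ) * (|f 0| + 1) + K := by
      simp only [M]; field_simp; ring
    nlinarith [abs_nonneg (f 0)]
  have h0 : |f 0| ≤ M := by simp only [M]; linarith [div_nonneg hK hρμ.le]
  have hM : 0 < M := by positivity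
  refine ⟨M, hM, fun t ht => abs_le.2 ⟨?_, ?_⟩⟩
  · have hneg : ∀ t, 0 ≤ t → HasDerivAt (fun s => -f s) (-c t * -f t + -g t) t :=
      fun t ht => (hf t ht).neg.congr_deriv (by ring)
    have := le_mul_exp_of_hasDerivAt_eq_neg_mul_add hneg hc
      (fun t ht => (neg_le_abs _).trans (hg t ht)) hM.le hKM ((neg_le_abs _).trans h0) ht
    linarith
  · exact le_mul_exp_of_hasDerivAt_eq_neg_mul_add hf hc
      (fun t ht => (le_abs_self _).trans (hg t ht)) hM.le hKM ((le_abs_self _).trans h0) ht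

section Logistic

variable {a β : ℝ} {T : ℝ → ℝ}

theorem logistic_pos (hT : ∀ t, 0 ≤ t → HasDerivAt T (T t * (a - β * T t)) t)
    (h0 : 0 < T 0) {t : ℝ} (ht : 0 ≤ t) : 0 < T t :=
  pos_of_hasDerivAt_eq_mul (h := fun s => a - β * T s)
    (fun s hs => continuousWithinAt_const.sub
      ((hT s hs).continuousAt.continuousWithinAt.const_mul β))
    (fun s hs => (hT s hs).congr_deriv (mul_comm _ _)) h0 ht

-- `1 / T` solves the linear equation `u' = β - a u`.
theorem logistic_inv_sub_eq (ha : a ≠ 0)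
    (hT : ∀ t, 0 ≤ t → HasDerivAt T (T t * (a - β * T t)) t) (h0 : 0 < T 0)
    {t : ℝ} (ht : 0 ≤ t) :
    (T t)⁻¹ - β / a = ((T 0)⁻¹ - β / a) * exp (-a * t) :=
  eq_mul_exp_of_hasDerivAt (f := fun s => (T s)⁻¹ - β / a) (fun s hs =>
    (((hT s hs).inv (logistic_pos hT h0 hs).ne').sub_const _).congr_deriv (by
      have := (logistic_pos hT h0 hs).ne'
      field_simp)) ht

theorem logistic_le_one (ha : 0 < a) (haβ : a ≤ β)
    (hT : ∀ t, 0 ≤ t → HasDerivAt T (T t * (a - β * T t)) t) (h0 : 0 < T 0) (h1 : T 0 ≤ 1)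
    {t : ℝ} (ht : 0 ≤ t) : T t ≤ 1 := by
  have hu := logistic_inv_sub_eq ha.ne' hT h0 ht
  have hq : 1 ≤ β / a := (one_le_div ha).2 haβ
  have hu0 : 1 ≤ (T 0)⁻¹ := (one_le_inv₀ h0).2 h1
  have hE : exp (-a * t) ≤ 1 := exp_le_one_iff.2 (by nlinarith)
  have hE0 := exp_pos (-a * t)
  -- `(T t)⁻¹ = (1 - E) β / a + E (T 0)⁻¹` is a convex combination of numbers `≥ 1`
  have : 1 ≤ (T t)⁻¹ := by nlinarith
  exact (one_le_inv₀ (logistic_pos hT h0 ht)).1 this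

theorem logistic_abs_sub_le (ha : 0 < a) (haβ : a ≤ β)
    (hT : ∀ t, 0 ≤ t → HasDerivAt T (T t * (a - β * T t)) t) (h0 : 0 < T 0) (h1 : T 0 ≤ 1)
    {t : ℝ} (ht : 0 ≤ t) : |T t - a / β| ≤ |(T 0)⁻¹ - β / a| * exp (-a * t) := by
  have hTt := logistic_pos hT h0 ht
  have hβ : 0 < β := ha.trans_le haβ
  have hfac : T t - a / β = -(T t * (a / β)) * ((T t)⁻¹ - β / a) := by
    field_simp
    ring
  have hc : |T t * (a / β)| ≤ 1 := by
    rw [abs_of_pos (by positivity)]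
    exact mul_le_one₀ (logistic_le_one ha haβ hT h0 h1 ht) (by positivity)
      ((div_le_one hβ).2 haβ)
  rw [hfac, logistic_inv_sub_eq ha.ne' hT h0 ht, abs_mul, abs_neg]
  calc |T t * (a / β)| * |((T 0)⁻¹ - β / a) * exp (-a * t)|
      ≤ |((T 0)⁻¹ - β / a) * exp (-a * t)| := mul_le_of_le_one_left (abs_nonneg _) hc
    _ = |(T 0)⁻¹ - β / a| * exp (-a * t) := by rw [abs_mul, abs_of_pos (exp_pos _)]

end Logistic

theorem endemic_equilibrium_spec {r γ β k Sstar Tstar Istar Dstar : ℝ} (hrγ : 0 < r + γ)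
    (hsup : r + γ < β) (hk : 0 ≤ k) (hSstar : Sstar = (r + γ) / β) (hTstar : Tstar = 1 - Sstar)
    (hIstar : Istar = β * Tstar * Sstar / (r + γ + k * β * Tstar))
    (hDstar : Dstar = k * β * Tstar * Istar / (r + γ)) :
    Tstar = (β - (r + γ)) / β ∧ Tstar ∈ Icc 0 1 ∧ Istar ∈ Icc 0 1 ∧
      (r + γ + k * β * Tstar) * Istar = β * Tstar * (1 - Tstar) ∧ Istar + Dstar = Tstar := by
  have hβ : 0 < β := hrγ.trans hsup
  have hT : Tstar = (β - (r + γ)) / β := by rw [hTstar, hSstar]; field_simp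
  have hT0 : 0 < Tstar := by rw [hT]; exact div_pos (by linarith) hβ
  have hT1 : Tstar ≤ 1 := by rw [hT]; exact (div_le_one hβ).2 (by linarith)
  have hden : 0 < r + γ + k * β * Tstar := by positivity
  have hS : Sstar = 1 - Tstar := by rw [hTstar]; ring
  have hI : (r + γ + k * β * Tstar) * Istar = β * Tstar * (1 - Tstar) := by
    rw [hIstar, hS]; field_simp
  have hID : Istar + Dstar = Tstar := by
    rw [hDstar]
    field_simp
    rw [hT] at hI ⊢
    field_simp at hI ⊢
    linear_combination hI
  have hI0 : 0 ≤ Istar := by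
    rw [hIstar, hS]
    exact div_nonneg (mul_nonneg (mul_nonneg hβ.le hT0.le) (sub_nonneg.2 hT1)) hden.le
  have hD0 : 0 ≤ Dstar := by rw [hDstar]; positivity
  exact ⟨hT, ⟨hT0.le, hT1⟩, ⟨hI0, by linarith⟩, hI, hID⟩

structure IsSISCoinfectionSolution (r γ β k : ℝ) (S I D : ℝ → ℝ) : Prop where
  hasDerivAt_S : ∀ t, 0 ≤ t →
    HasDerivAt S (r * (1 - S t) + γ * I t + γ * D t - β * (I t + D t) * S t) t
  hasDerivAt_I : ∀ t, 0 ≤ t →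
    HasDerivAt I (β * (I t + D t) * S t - (r + γ) * I t - k * β * I t * (I t + D t)) t
  hasDerivAt_D : ∀ t, 0 ≤ t → HasDerivAt D (k * β * I t * (I t + D t) - (r + γ) * D t) t

namespace IsSISCoinfectionSolution

variable {r γ β k : ℝ} {S I D : ℝ → ℝ}

theorem add_add_eq_one (h : IsSISCoinfectionSolution r γ β k S I D) (h0 : S 0 + I 0 + D 0 = 1)
    {t : ℝ} (ht : 0 ≤ t) : S t + I t + D t = 1 := by
  have := eq_mul_exp_of_hasDerivAt (f := fun s => S s + I s + D s - 1) (a := -r)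
    (fun s hs => ((((h.hasDerivAt_S s hs).add (h.hasDerivAt_I s hs)).add
      (h.hasDerivAt_D s hs)).sub_const 1).congr_deriv (by ring)) ht
  simp only [h0, sub_self, zero_mul] at this
  linarith

theorem hasDerivAt_I_add_D (h : IsSISCoinfectionSolution r γ β k S I D) (h0 : S 0 + I 0 + D 0 = 1)
    {t : ℝ} (ht : 0 ≤ t) :
    HasDerivAt (fun s => I s + D s) ((I t + D t) * (β - (r + γ) - β * (I t + D t))) t :=
  ((h.hasDerivAt_I t ht).add (h.hasDerivAt_D t ht)).congr_deriv (by
    rw [show S t = 1 - (I t + D t) by linarith [h.add_add_eq_one h0 ht]]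
    ring)

theorem hasDerivAt_I_sub (h : IsSISCoinfectionSolution r γ β k S I D)
    (h0 : S 0 + I 0 + D 0 = 1) {Tstar Istar : ℝ}
    (hIstar : (r + γ + k * β * Tstar) * Istar = β * Tstar * (1 - Tstar)) {t : ℝ} (ht : 0 ≤ t) :
    HasDerivAt (fun s => I s - Istar) (-(r + γ + k * β * (I t + D t)) * (I t - Istar) +
      β * (1 - (I t + D t) - Tstar - k * Istar) * (I t + D t - Tstar)) t :=
  ((h.hasDerivAt_I t ht).sub_const Istar).congr_deriv (by
    rw [show S t = 1 - (I t + D t) by linarith [h.add_add_eq_one h0 ht]]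
    linear_combination -hIstar)

theorem exists_abs_I_sub_le (h : IsSISCoinfectionSolution r γ β k S I D)
    (h0 : S 0 + I 0 + D 0 = 1) (hβ : 0 ≤ β) (hk : 0 ≤ k) {Tstar Istar μ C : ℝ}
    (hTstar : Tstar ∈ Icc 0 1) (hIstar : Istar ∈ Icc 0 1)
    (hIeq : (r + γ + k * β * Tstar) * Istar = β * Tstar * (1 - Tstar))
    (hT : ∀ t, 0 ≤ t → I t + D t ∈ Icc 0 1)
    (hTconv : ∀ t, 0 ≤ t → |I t + D t - Tstar| ≤ C * exp (-μ * t)) (hμ : μ < r + γ) :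
    ∃ M > 0, ∀ t, 0 ≤ t → |I t - Istar| ≤ M * exp (-μ * t) := by
  refine exists_abs_le_mul_exp_of_hasDerivAt_eq_neg_mul_add (K := β * (1 + k) * C)
    (fun t ht => h.hasDerivAt_I_sub h0 hIeq ht)
    (fun t ht => le_add_of_nonneg_right (by have := (hT t ht).1; positivity)) (fun t ht => ?_) hμ
  obtain ⟨hT0, hT1⟩ := hT t ht
  have hcoef : |1 - (I t + D t) - Tstar - k * Istar| ≤ 1 + k := by
    rw [abs_le]
    constructor <;> nlinarith [hTstar.1, hTstar.2, hIstar.1, hIstar.2]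
  rw [abs_mul, abs_mul, abs_of_nonneg hβ, mul_assoc, mul_assoc, mul_assoc]
  exact mul_le_mul_of_nonneg_left
    (mul_le_mul hcoef (hTconv t ht) (abs_nonneg _) (by linarith)) hβ

end IsSISCoinfectionSolution

theorem sis_single_strain_supercritical_endemic_convergence_general
    (r γ β k : ℝ) (hr : 0 < r) (hγ : 0 ≤ γ) (hk : 0 ≤ k)
    (S I D : ℝ → ℝ)
    (hS : ∀ t, 0 ≤ t → HasDerivAt S
      (r * (1 - S t) + γ * I t + γ * D t - β * (I t + D t) * S t) t)
    (hI : ∀ t, 0 ≤ t → HasDerivAt I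
      (β * (I t + D t) * S t - (r + γ) * I t - k * β * I t * (I t + D t)) t)
    (hD : ∀ t, 0 ≤ t → HasDerivAt D
      (k * β * I t * (I t + D t) - (r + γ) * D t) t)
    (hinit : S 0 ∈ Set.Icc (0:ℝ) 1 ∧ I 0 ∈ Set.Icc (0:ℝ) 1 ∧ D 0 ∈ Set.Icc (0:ℝ) 1
      ∧ S 0 + I 0 + D 0 = 1)
    (hnotE0 : (S 0, I 0, D 0) ≠ ((1:ℝ), (0:ℝ), (0:ℝ)))
    (hsup : r + γ < β)
    (Sstar Tstar Istar Dstar : ℝ)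
    (hSstar : Sstar = (r + γ) / β)
    (hTstar : Tstar = 1 - Sstar)
    (hIstar : Istar = β * Tstar * Sstar / (r + γ + k * β * Tstar))
    (hDstar : Dstar = k * β * Tstar * Istar / (r + γ)) :
    ∃ M > (0:ℝ), ∃ μ > (0:ℝ), ∀ t, 0 ≤ t →
      |S t - Sstar| + |I t - Istar| + |D t - Dstar| ≤ M * Real.exp (-μ * t) := by
  obtain ⟨hS0, hI0, hD0, hN0⟩ := hinit
  have h : IsSISCoinfectionSolution r γ β k S I D := ⟨hS, hI, hD⟩
  have hrγ : 0 < r + γ := by linarith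
  have ha : 0 < β - (r + γ) := by linarith
  obtain ⟨hTeq, hTstar01, hIstar01, hIeq, hID⟩ :=
    endemic_equilibrium_spec hrγ hsup hk hSstar hTstar hIstar hDstar
  have hT0 : 0 < I 0 + D 0 := by
    refine lt_of_le_of_ne (add_nonneg hI0.1 hD0.1) fun h0 => hnotE0 ?_
    simp only [Prod.mk.injEq]
    refine ⟨?_, ?_, ?_⟩ <;> linarith [hI0.1, hD0.1]
  have hT1 : I 0 + D 0 ≤ 1 := by linarith [hS0.1]
  have hlog := fun t (ht : 0 ≤ t) => h.hasDerivAt_I_add_D hN0 ht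
  obtain ⟨μ, hμ, hμρ, hμa⟩ : ∃ μ > 0, μ < r + γ ∧ μ ≤ β - (r + γ) :=
    ⟨min (r + γ) (β - (r + γ)) / 2, by positivity,
      by linarith [min_le_left (r + γ) (β - (r + γ))],
      by linarith [min_le_right (r + γ) (β - (r + γ))]⟩
  set C := |(I 0 + D 0)⁻¹ - β / (β - (r + γ))|
  have hTconv : ∀ t, 0 ≤ t → |I t + D t - Tstar| ≤ C * exp (-μ * t) := fun t ht => by
    refine (hTeq ▸ logistic_abs_sub_le ha (by linarith) hlog hT0 hT1 ht).trans
      (mul_le_mul_of_nonneg_left (exp_le_exp.2 ?_) (abs_nonneg _))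
    nlinarith
  have hT : ∀ t, 0 ≤ t → I t + D t ∈ Icc 0 1 := fun t ht =>
    ⟨(logistic_pos hlog hT0 ht).le, logistic_le_one ha (by linarith) hlog hT0 hT1 ht⟩
  obtain ⟨M, hM, hIconv⟩ :=
    h.exists_abs_I_sub_le hN0 (by linarith) hk hTstar01 hIstar01 hIeq hT hTconv hμρ
  refine ⟨2 * (C + M), by positivity, μ, hμ, fun t ht => ?_⟩
  have hSt : S t - Sstar = -(I t + D t - Tstar) := by linarith [h.add_add_eq_one hN0 ht]
  have hDt : D t - Dstar = (I t + D t - Tstar) - (I t - Istar) := by linarith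
  rw [hSt, hDt, abs_neg]
  linarith [abs_sub (I t + D t - Tstar) (I t - Istar), hTconv t ht, hIconv t ht]

/-- For the single-patch single-strain SIS system with coinfection, if
`β > r + γ` then every solution with initial data in `Υ₀ = Υ ∖ {(1,0,0)}` converges
exponentially to the endemic equilibrium `(S*, I*, D*)`. -/
theorem sis_single_strain_supercritical_endemic_convergence
    (r γ β k : ℝ) (hr : 0 < r) (hγ : 0 ≤ γ) (hβ : 0 ≤ β) (hk : 0 ≤ k)
    (S I D : ℝ → ℝ)
    (hS : ∀ t, 0 ≤ t → HasDerivAt S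
      (r * (1 - S t) + γ * I t + γ * D t - β * (I t + D t) * S t) t)
    (hI : ∀ t, 0 ≤ t → HasDerivAt I
      (β * (I t + D t) * S t - (r + γ) * I t - k * β * I t * (I t + D t)) t)
    (hD : ∀ t, 0 ≤ t → HasDerivAt D
      (k * β * I t * (I t + D t) - (r + γ) * D t) t)
    (hinit : S 0 ∈ Set.Icc (0:ℝ) 1 ∧ I 0 ∈ Set.Icc (0:ℝ) 1 ∧ D 0 ∈ Set.Icc (0:ℝ) 1
      ∧ S 0 + I 0 + D 0 = 1)
    (hnotE0 : (S 0, I 0, D 0) ≠ ((1:ℝ), (0:ℝ), (0:ℝ)))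
    (hsup : r + γ < β)
    (Sstar Tstar Istar Dstar : ℝ)
    (hSstar : Sstar = (r + γ) / β)
    (hTstar : Tstar = 1 - Sstar)
    (hIstar : Istar = β * Tstar * Sstar / (r + γ + k * β * Tstar))
    (hDstar : Dstar = k * β * Tstar * Istar / (r + γ)) :
    ∃ M > (0:ℝ), ∃ μ > (0:ℝ), ∀ t, 0 ≤ t →
      |S t - Sstar| + |I t - Istar| + |D t - Dstar| ≤ M * Real.exp (-μ * t) :=
  sis_single_strain_supercritical_endemic_convergence_general r γ β k hr hγ hk S I D hS hI hD hinit
    hnotE0 hsup Sstar Tstar Istar Dstar hSstar hTstar hIstar hDstar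
end

section
/- Consider the scalar ODE S'(t) = (1−S(t))(r + γ − βS(t)) with r > 0, γ ≥ 0, β ≥ 0. (i) If β ≤ r + γ and S(0) ∈ [0,1], then S(t) ∈ [0,1] for all t ≥ 0 and lim_{t→+∞} S(t) = 1. (ii) If β > r + γ and S(0) ∈ [0,1), then S(t) converges to S* = (r+γ)/β exponentially fast: there exist M > 0 and μ > 0 such that |S(t) − S*| ≤ M e^{−μt} for all t ≥ 0. -/
/-!
Everything rests on one-sided invariance: if `f' ≤ a f` wherever `f ≥ 0`, with `a` continuous,
then `f 0 ≤ 0` forces `f ≤ 0`, since `f` can never cross a fence `ε e^{(K+1)t}` with `K ≥ a`.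
Applied to `S - 1`, `-S` and `S - max (S 0) S*` it gives the invariant intervals.
If `β ≤ r + γ`, then `S' ≥ (r + γ)(1 - S)²` on `[0, 1]`, so `S` increases and cannot stay below
any level `l < 1`. If `β > r + γ`, then `u = S - S*` solves `u' = -β (1 - S) u` with
`1 - S ≥ 1 - max (S 0) S* > 0`, and invariance applied to `u² - u(0)² e^{-2μt}` gives the decay.
-/

open Set Filter Real
open scoped Topology

theorem nonpos_of_hasDerivAt_le_mul_of_nonneg {f f' a : ℝ → ℝ}
    (hf : ∀ t, 0 ≤ t → HasDerivAt f (f' t) t) (ha : ContinuousOn a (Ici 0))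
    (hf' : ∀ t, 0 ≤ t → 0 ≤ f t → f' t ≤ a t * f t) (h0 : f 0 ≤ 0) {T : ℝ} (hT : 0 ≤ T) :
    f T ≤ 0 := by
  obtain ⟨K, hK⟩ : BddAbove (a '' Icc 0 T) :=
    (isCompact_Icc.image_of_continuousOn (ha.mono Icc_subset_Ici_self)).bddAbove
  refine le_of_forall_pos_le_add fun ε hε => ?_
  -- The fence `ε * exp ((K + 1) * (t - T))` grows strictly faster than `f` can at contact.
  have hB : ∀ t, HasDerivAt (fun t => ε * exp ((K + 1) * (t - T)))
      ((K + 1) * (ε * exp ((K + 1) * (t - T)))) t := fun t =>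
    ((((hasDerivAt_id' t).sub_const T).const_mul (K + 1)).exp.const_mul ε).congr_deriv (by ring)
  have hfence := image_le_of_deriv_right_lt_deriv_boundary (a := 0) (b := T)
    (fun t ht => (hf t ht.1).continuousAt.continuousWithinAt)
    (fun t ht => (hf t ht.1).hasDerivWithinAt) (h0.trans (mul_pos hε (exp_pos _)).le) hB ?_
    ⟨hT, le_rfl⟩
  · simpa using hfence
  intro t ht hft
  have hpos : 0 < f t := hft ▸ by positivity
  calc f' t ≤ a t * f t := hf' t ht.1 hpos.le
    _ ≤ K * f t := mul_le_mul_of_nonneg_right (hK ⟨t, Ico_subset_Icc_self ht, rfl⟩) hpos.le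
    _ < (K + 1) * f t := by linarith
    _ = _ := by rw [hft]

theorem abs_le_mul_exp_of_hasDerivAt_eq_mul {f a : ℝ → ℝ} {μ : ℝ}
    (hf : ∀ t, 0 ≤ t → HasDerivAt f (a t * f t) t) (ha : ∀ t, 0 ≤ t → a t ≤ -μ)
    {T : ℝ} (hT : 0 ≤ T) : |f T| ≤ |f 0| * exp (-μ * T) := by
  have hg : ∀ t, 0 ≤ t → HasDerivAt (fun t => f t ^ 2 - f 0 ^ 2 * exp (-2 * μ * t))
      (2 * f t * (a t * f t) - f 0 ^ 2 * (-2 * μ * exp (-2 * μ * t))) t := fun t ht => by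
    refine (((hf t ht).fun_pow 2).fun_sub
      ((((hasDerivAt_id' t).const_mul (-2 * μ)).exp).const_mul (f 0 ^ 2))).congr_deriv ?_
    push_cast; ring
  have hsq := nonpos_of_hasDerivAt_le_mul_of_nonneg hg (a := fun _ => -2 * μ)
    continuousOn_const (fun t ht _ => by nlinarith [ha t ht, sq_nonneg (f t)]) (by simp) hT
  refine abs_le_of_sq_le_sq ?_ (by positivity)
  calc f T ^ 2 ≤ f 0 ^ 2 * exp (-2 * μ * T) := by linarith
    _ = (|f 0| * exp (-μ * T)) ^ 2 := by rw [mul_pow, sq_abs, ← exp_nat_mul]; ring_nf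

namespace SusceptibleODE

variable {k β : ℝ} {S : ℝ → ℝ}

theorem mul_one_sub_sq_le_of_mem_Icc {s : ℝ} (hs : s ∈ Icc (0 : ℝ) 1) (hβk : β ≤ k) :
    k * (1 - s) ^ 2 ≤ (1 - s) * (k - β * s) := by
  have hlin : k * (1 - s) ≤ k - β * s := by nlinarith [hs.1]
  nlinarith [mul_le_mul_of_nonneg_left hlin (sub_nonneg.2 hs.2)]

variable (hS : ∀ t, 0 ≤ t → HasDerivAt S ((1 - S t) * (k - β * S t)) t)
include hS

theorem continuousOn_Ici : ContinuousOn S (Ici 0) :=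
  fun t ht => (hS t ht).continuousAt.continuousWithinAt

theorem le_one (h0 : S 0 ≤ 1) {t : ℝ} (ht : 0 ≤ t) : S t ≤ 1 := by
  have hf : ∀ t, 0 ≤ t → HasDerivAt (fun t => S t - 1) ((1 - S t) * (k - β * S t)) t :=
    fun t ht => (hS t ht).sub_const 1
  refine sub_nonpos.1 <| nonpos_of_hasDerivAt_le_mul_of_nonneg hf (a := fun t => β * S t - k)
    (by have := continuousOn_Ici hS; fun_prop)
    (fun t _ _ => le_of_eq (by ring)) (sub_nonpos.2 h0) ht

theorem nonneg (hk : 0 ≤ k) (h0 : 0 ≤ S 0) {t : ℝ} (ht : 0 ≤ t) : 0 ≤ S t := by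
  have hf : ∀ t, 0 ≤ t → HasDerivAt (fun t => -S t) (-((1 - S t) * (k - β * S t))) t :=
    fun t ht => (hS t ht).neg
  refine neg_nonpos.1 <| nonpos_of_hasDerivAt_le_mul_of_nonneg hf (a := fun t => -β * (1 - S t))
    (by have := continuousOn_Ici hS; fun_prop)
    (fun t _ hSt => ?_) (neg_nonpos.2 h0) ht
  nlinarith [mul_nonneg (by linarith : (0 : ℝ) ≤ 1 - S t) hk]

theorem mem_Icc (hk : 0 ≤ k) (h0 : S 0 ∈ Icc (0 : ℝ) 1) {t : ℝ} (ht : 0 ≤ t) :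
    S t ∈ Icc (0 : ℝ) 1 :=
  ⟨nonneg hS hk h0.1 ht, le_one hS h0.2 ht⟩

theorem monotoneOn_Ici (hk : 0 ≤ k) (hβk : β ≤ k) (h0 : S 0 ∈ Icc (0 : ℝ) 1) :
    MonotoneOn S (Ici 0) := by
  refine monotoneOn_of_hasDerivWithinAt_nonneg (convex_Ici 0) (continuousOn_Ici hS)
    (fun t ht => (hS t (interior_subset ht)).hasDerivWithinAt) fun t ht => ?_
  have hSt := mem_Icc hS hk h0 (interior_subset ht)
  exact (mul_nonneg hk (sq_nonneg _)).trans (mul_one_sub_sq_le_of_mem_Icc hSt hβk)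

theorem exists_lt (hk : 0 < k) (hβk : β ≤ k) (h0 : S 0 ∈ Icc (0 : ℝ) 1) {l : ℝ}
    (hl : l < 1) : ∃ t, 0 ≤ t ∧ l < S t := by
  by_contra! hle
  set ρ := k * (1 - l) ^ 2
  have hρ : 0 < ρ := by have := sub_pos.2 hl; positivity
  have hf : ∀ t, 0 ≤ t → HasDerivAt (fun t => S 0 + ρ * t - S t)
      (ρ - (1 - S t) * (k - β * S t)) t := fun t ht =>
    (((hasDerivAt_id' t).const_mul ρ).const_add (S 0) |>.sub (hS t ht)).congr_deriv (by ring)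
  -- While `S ≤ l`, the speed `S'` stays above `ρ`, so `S` would leave `[0, 1]`.
  have hgrowth : ∀ T, 0 ≤ T → S 0 + ρ * T ≤ S T := fun T hT => by
    refine sub_nonpos.1 <| nonpos_of_hasDerivAt_le_mul_of_nonneg hf (a := fun _ => 0)
      continuousOn_const (fun t ht _ => ?_) (by simp) hT
    have hSt := mem_Icc hS hk.le h0 ht
    have hsq : (1 - l) ^ 2 ≤ (1 - S t) ^ 2 :=
      pow_le_pow_left₀ (by linarith) (by linarith [hle t ht]) 2
    nlinarith [mul_one_sub_sq_le_of_mem_Icc hSt hβk]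
  have hT : 0 ≤ 2 / ρ := by positivity
  have := hgrowth _ hT
  rw [mul_div_cancel₀ _ hρ.ne'] at this
  linarith [h0.1, (mem_Icc hS hk.le h0 hT).2]

theorem tendsto_one (hk : 0 < k) (hβk : β ≤ k) (h0 : S 0 ∈ Icc (0 : ℝ) 1) :
    Tendsto S atTop (𝓝 1) := by
  refine tendsto_order.2 ⟨fun l hl => ?_, fun u hu => ?_⟩
  · obtain ⟨t₀, ht₀, hlt⟩ := exists_lt hS hk hβk h0 hl
    filter_upwards [eventually_ge_atTop t₀] with t ht
    exact hlt.trans_le (monotoneOn_Ici hS hk.le hβk h0 ht₀ (ht₀.trans ht) ht)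
  · filter_upwards [eventually_ge_atTop 0] with t ht
    exact (mem_Icc hS hk.le h0 ht).2.trans_lt hu

theorem le_max (hβ : 0 < β) (h0 : S 0 ≤ 1) {t : ℝ} (ht : 0 ≤ t) :
    S t ≤ max (S 0) (k / β) := by
  have hf : ∀ t, 0 ≤ t → HasDerivAt (fun t => S t - max (S 0) (k / β))
      ((1 - S t) * (k - β * S t)) t := fun t ht => (hS t ht).sub_const _
  refine sub_nonpos.1 <| nonpos_of_hasDerivAt_le_mul_of_nonneg hf (a := fun _ => 0)
    continuousOn_const (fun t ht hSt => ?_) (by simp) ht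
  have hk : k ≤ β * S t := (div_le_iff₀' hβ).1 (by linarith [le_max_right (S 0) (k / β)])
  nlinarith [le_one hS h0 ht]

theorem abs_sub_le_mul_exp (hβ : 0 < β) (h0 : S 0 ≤ 1) {t : ℝ} (ht : 0 ≤ t) :
    |S t - k / β| ≤ |S 0 - k / β| * exp (-(β * (1 - max (S 0) (k / β))) * t) := by
  have hf : ∀ t, 0 ≤ t → HasDerivAt (fun t => S t - k / β)
      (-β * (1 - S t) * (S t - k / β)) t := fun t ht =>
    ((hS t ht).sub_const _).congr_deriv (by field_simp; ring)
  refine abs_le_mul_exp_of_hasDerivAt_eq_mul hf (fun t ht => ?_) ht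
  nlinarith [le_max hS hβ h0 ht]

end SusceptibleODE

theorem scalar_susceptible_ode_asymptotics_general
    (r γ β : ℝ) (hr : 0 < r) (hγ : 0 ≤ γ)
    (S : ℝ → ℝ)
    (hS : ∀ t, 0 ≤ t → HasDerivAt S ((1 - S t) * (r + γ - β * S t)) t) :
    (β ≤ r + γ → S 0 ∈ Set.Icc (0:ℝ) 1 →
      (∀ t, 0 ≤ t → S t ∈ Set.Icc (0:ℝ) 1)
      ∧ Filter.Tendsto S Filter.atTop (nhds 1))
    ∧ (r + γ < β → S 0 ∈ Set.Ico (0:ℝ) 1 →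
      ∃ M > (0:ℝ), ∃ μ > (0:ℝ), ∀ t, 0 ≤ t →
        |S t - (r + γ) / β| ≤ M * Real.exp (-μ * t)) := by
  have hk : 0 < r + γ := by linarith
  refine ⟨fun hβk h0 => ⟨fun t => SusceptibleODE.mem_Icc hS hk.le h0,
    SusceptibleODE.tendsto_one hS hk hβk h0⟩, fun hkβ h0 => ?_⟩
  have hβ : 0 < β := hk.trans hkβ
  have hmax : max (S 0) ((r + γ) / β) < 1 := max_lt h0.2 ((div_lt_one hβ).2 hkβ)
  refine ⟨|S 0 - (r + γ) / β| + 1, by positivity, β * (1 - max (S 0) ((r + γ) / β)),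
    mul_pos hβ (sub_pos.2 hmax), fun t ht => ?_⟩
  calc |S t - (r + γ) / β| ≤ _ := SusceptibleODE.abs_sub_le_mul_exp hS hβ h0.2.le ht
    _ ≤ _ := mul_le_mul_of_nonneg_right (le_add_of_nonneg_right zero_le_one) (exp_pos _).le

/-- For the scalar ODE `S' = (1 − S)(r + γ − βS)` with `r > 0`, `γ ≥ 0`,
`β ≥ 0`:
(i) if `β ≤ r + γ` and `S(0) ∈ [0,1]`, then `S(t) ∈ [0,1]` for all `t ≥ 0` and
`S(t) → 1` as `t → +∞`;
(ii) if `β > r + γ` and `S(0) ∈ [0,1)`, then `S(t)` converges to `S* = (r+γ)/β`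
exponentially fast. -/
theorem scalar_susceptible_ode_asymptotics
    (r γ β : ℝ) (hr : 0 < r) (hγ : 0 ≤ γ) (hβ : 0 ≤ β)
    (S : ℝ → ℝ)
    (hS : ∀ t, 0 ≤ t → HasDerivAt S ((1 - S t) * (r + γ - β * S t)) t) :
    (β ≤ r + γ → S 0 ∈ Set.Icc (0:ℝ) 1 →
      (∀ t, 0 ≤ t → S t ∈ Set.Icc (0:ℝ) 1)
      ∧ Filter.Tendsto S Filter.atTop (nhds 1))
    ∧ (r + γ < β → S 0 ∈ Set.Ico (0:ℝ) 1 →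
      ∃ M > (0:ℝ), ∃ μ > (0:ℝ), ∀ t, 0 ≤ t →
        |S t - (r + γ) / β| ≤ M * Real.exp (-μ * t)) :=
  scalar_susceptible_ode_asymptotics_general r γ β hr hγ S hS
end

section
/- One has 𝒫 := 2(T*)² − I*D* > 0, the row vector ω* = (φ*, ψ*) with φ* = (T* + I*)/𝒫 and ψ* = 2T*/𝒫 has strictly positive entries, and ω* is a left eigenvector of A* for the eigenvalue 0 normalized against X* = (I*, D*): ω* A* = (0, 0) and φ* I* + ψ* D* = 1. -/
/-!
With `c = r + γ`, the relation `β S* = c` turns the definition of `I*` into the equilibrium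
identity `I* (c + kβT*) = c T*`, and this in turn gives `D* = T* − I*`. Hence
`𝒫 = 2T*² − I*(T* − I*)`, a positive definite quadratic form in `(T*, I*)`, and the
normalization `(T* + I*) I* + 2T* D* = 𝒫` is a polynomial identity. The eigenvector
equations for `(T* + I*, 2T*)` are, column by column, a tautology and the equilibrium identity.
-/

lemma Dstar_eq_sub {c k β T I : ℝ} (hc : c ≠ 0) (hI : I * (c + k * β * T) = c * T) :
    k * β * T * I / c = T - I := by
  rw [div_eq_iff hc]
  linear_combination hI

lemma two_sq_sub_mul_sub_pos {T : ℝ} (hT : T ≠ 0) (I : ℝ) : 0 < 2 * T ^ 2 - I * (T - I) := by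
  nlinarith [sq_nonneg (T - I), sq_nonneg I, sq_pos_of_ne_zero hT]

lemma Matrix.vecMul_fin_two {R : Type*} [NonUnitalNonAssocSemiring R] (a b p q s t : R) :
    Matrix.vecMul ![a, b] !![p, q; s, t] = ![a * p + b * s, a * q + b * t] := by
  ext i
  fin_cases i <;> simp [Matrix.vecMul]

lemma vecMul_Astar_eq_zero {c k β S T I : ℝ} (hβS : β * S = c)
    (hI : I * (c + k * β * T) = c * T) :
    Matrix.vecMul ![T + I, 2 * T]
      !![-(k * β * T), β * S; (1/2) * k * β * (T + I), (1/2) * k * β * I - c] = ![0, 0] := by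
  rw [Matrix.vecMul_fin_two]
  congr 2
  · ring
  · linear_combination (T + I) * hβS + hI

/-- One has `Pscr = 2(T*)² − I*D* > 0`; the row vector
`ω* = ((T*+I*)/Pscr, 2T*/Pscr)` has strictly positive entries, is a left eigenvector of `A*`
for the eigenvalue `0`, and is normalized against `X* = (I*, D*)`:
`ω* A* = (0,0)` and `φ* I* + ψ* D* = 1`. -/
theorem Astar_left_eigenvector
    (r γ k β : ℝ) (hr : 0 < r) (hγ : 0 ≤ γ) (hk : 0 < k) (hβ : r + γ < β)
    (Sstar Tstar Istar Dstar : ℝ)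
    (hSstar : Sstar = (r + γ) / β)
    (hTstar : Tstar = 1 - Sstar)
    (hIstar : Istar = β * Tstar * Sstar / (r + γ + k * β * Tstar))
    (hDstar : Dstar = k * β * Tstar * Istar / (r + γ))
    (Astar : Matrix (Fin 2) (Fin 2) ℝ)
    (hAstar : Astar = !![-(k * β * Tstar), β * Sstar;
                         (1/2) * k * β * (Tstar + Istar), (1/2) * k * β * Istar - (r + γ)])
    (Pscr φstar ψstar : ℝ)
    (hP : Pscr = 2 * Tstar ^ 2 - Istar * Dstar)
    (hφ : φstar = (Tstar + Istar) / Pscr)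
    (hψ : ψstar = 2 * Tstar / Pscr) :
    0 < Pscr ∧ 0 < φstar ∧ 0 < ψstar
    ∧ Matrix.vecMul ![φstar, ψstar] Astar = ![0, 0]
    ∧ φstar * Istar + ψstar * Dstar = 1 := by
  have hc : 0 < r + γ := by positivity
  have hβ0 : 0 < β := hc.trans hβ
  have hβS : β * Sstar = r + γ := by rw [hSstar, mul_div_cancel₀ _ hβ0.ne']
  have hT : 0 < Tstar := by rwa [hTstar, hSstar, sub_pos, div_lt_one hβ0]
  have hden : 0 < r + γ + k * β * Tstar := by positivity
  have hIeq : Istar * (r + γ + k * β * Tstar) = (r + γ) * Tstar := by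
    rw [hIstar, div_mul_cancel₀ _ hden.ne', ← hβS]
    ring
  have hI : 0 < Istar := by rw [eq_div_of_mul_eq hden.ne' hIeq]; positivity
  have hD : Dstar = Tstar - Istar := hDstar.trans (Dstar_eq_sub hc.ne' hIeq)
  have hPpos : 0 < Pscr := hP ▸ hD ▸ two_sq_sub_mul_sub_pos hT.ne' Istar
  have hω : ![φstar, ψstar] = Pscr⁻¹ • ![Tstar + Istar, 2 * Tstar] := by
    simp [hφ, hψ, div_eq_inv_mul]
  refine ⟨hPpos, by rw [hφ]; positivity, by rw [hψ]; positivity, ?_, ?_⟩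
  · rw [hω, hAstar, Matrix.smul_vecMul, vecMul_Astar_eq_zero hβS hIeq]
    simp
  · have hnorm : (Tstar + Istar) * Istar + 2 * Tstar * Dstar = Pscr := by rw [hP, hD]; ring
    rw [hφ, hψ]
    field_simp
    linear_combination hnorm
end

section
/- The matrix A* satisfies det A* = 0 and trace A* = −(1/2)kβ(2T* − I*) − (r+γ) < 0; consequently the eigenvalues of A* are 0 and trace A*, so the nonzero eigenvalue of A* is strictly negative. -/
/-! At the equilibrium `β S* = r + γ` and `I* (r + γ + kβT*) = (r + γ) T*`; these two relations
make the determinant of `A*` vanish and give `I* < T*`, so the trace is negative. A `2 × 2`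
matrix with zero determinant has characteristic polynomial `X (X - trace)`. -/

open Polynomial in
theorem Matrix.spectrum_fin_two_of_det_eq_zero {K : Type*} [Field K]
    {A : Matrix (Fin 2) (Fin 2) K} (h : A.det = 0) : spectrum K A = {0, A.trace} := by
  ext μ
  have hfactor : μ ^ 2 - A.trace * μ = μ * (μ - A.trace) := by ring
  simp [mem_spectrum_iff_isRoot_charpoly, charpoly_fin_two, h, hfactor, sub_eq_zero]

section Equilibrium

variable {c k β S T I : ℝ}

theorem equilibrium_T_pos (hc : 0 < c) (hβ : c < β) (hS : S = c / β) (hT : T = 1 - S) :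
    0 < T := by
  rw [hT, hS, sub_pos, div_lt_one (hc.trans hβ)]
  exact hβ

theorem equilibrium_I_mul_eq (hS : β * S = c) (hden : c + k * β * T ≠ 0)
    (hI : I = β * T * S / (c + k * β * T)) : I * (c + k * β * T) = c * T := by
  rw [hI, div_mul_cancel₀ _ hden]
  linear_combination T * hS

theorem equilibrium_I_lt_T (hc : 0 < c) (hkβ : 0 < k * β) (hT : 0 < T)
    (hI : I * (c + k * β * T) = c * T) : I < T := by
  have hden : 0 < c + k * β * T := by positivity
  nlinarith [mul_pos hkβ (mul_pos hT hT)]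

end Equilibrium

noncomputable def equilibriumJacobian (c k β S T I : ℝ) : Matrix (Fin 2) (Fin 2) ℝ :=
  !![-(k * β * T), β * S; (1/2) * k * β * (T + I), (1/2) * k * β * I - c]

namespace equilibriumJacobian

variable {c k β S T I : ℝ}

theorem det_eq_zero (hS : β * S = c) (hI : I * (c + k * β * T) = c * T) :
    (equilibriumJacobian c k β S T I).det = 0 := by
  rw [equilibriumJacobian, Matrix.det_fin_two_of]
  linear_combination (-(1/2) * k * β) * hI - ((1/2) * k * β * (T + I)) * hS

theorem trace_eq :
    (equilibriumJacobian c k β S T I).trace = -((1/2) * k * β * (2 * T - I)) - c := by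
  rw [equilibriumJacobian, Matrix.trace_fin_two_of]
  ring

theorem trace_neg (hc : 0 < c) (hkβ : 0 < k * β) (hT : 0 < T) (hIT : I < T) :
    (equilibriumJacobian c k β S T I).trace < 0 := by
  rw [trace_eq]
  nlinarith

end equilibriumJacobian

theorem Astar_spectrum_general
    (r γ k β : ℝ) (hr : 0 < r) (hγ : 0 ≤ γ) (hk : 0 < k) (hβ : r + γ < β)
    (Sstar Tstar Istar : ℝ)
    (hSstar : Sstar = (r + γ) / β)
    (hTstar : Tstar = 1 - Sstar)
    (hIstar : Istar = β * Tstar * Sstar / (r + γ + k * β * Tstar))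
    (Astar : Matrix (Fin 2) (Fin 2) ℝ)
    (hAstar : Astar = !![-(k * β * Tstar), β * Sstar;
                         (1/2) * k * β * (Tstar + Istar), (1/2) * k * β * Istar - (r + γ)]) :
    Astar.det = 0
    ∧ Astar.trace = -((1/2) * k * β * (2 * Tstar - Istar)) - (r + γ)
    ∧ Astar.trace < 0
    ∧ spectrum ℝ Astar = {0, Astar.trace} := by
  have hc : 0 < r + γ := by positivity
  have hβ0 : 0 < β := hc.trans hβ
  have hβS : β * Sstar = r + γ := by
    rw [hSstar]
    field_simp
  have hT : 0 < Tstar := equilibrium_T_pos hc hβ hSstar hTstar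
  have hkβ : 0 < k * β := by positivity
  have hI := equilibrium_I_mul_eq hβS (by positivity) hIstar
  have hdet := equilibriumJacobian.det_eq_zero hβS hI
  rw [show Astar = equilibriumJacobian (r + γ) k β Sstar Tstar Istar from hAstar]
  exact ⟨hdet, equilibriumJacobian.trace_eq,
    equilibriumJacobian.trace_neg hc hkβ hT (equilibrium_I_lt_T hc hkβ hT hI),
    Matrix.spectrum_fin_two_of_det_eq_zero hdet⟩

/-- `det A* = 0` and `trace A* = −(1/2)kβ(2T* − I*) − (r+γ) < 0`;
consequently the eigenvalues of `A*` are `0` and `trace A*`, so the nonzero eigenvalue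
of `A*` is strictly negative. -/
theorem Astar_spectrum
    (r γ k β : ℝ) (hr : 0 < r) (hγ : 0 ≤ γ) (hk : 0 < k) (hβ : r + γ < β)
    (Sstar Tstar Istar Dstar : ℝ)
    (hSstar : Sstar = (r + γ) / β)
    (hTstar : Tstar = 1 - Sstar)
    (hIstar : Istar = β * Tstar * Sstar / (r + γ + k * β * Tstar))
    (hDstar : Dstar = k * β * Tstar * Istar / (r + γ))
    (Astar : Matrix (Fin 2) (Fin 2) ℝ)
    (hAstar : Astar = !![-(k * β * Tstar), β * Sstar;
                         (1/2) * k * β * (Tstar + Istar), (1/2) * k * β * Istar - (r + γ)]) :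
    Astar.det = 0
    ∧ Astar.trace = -((1/2) * k * β * (2 * Tstar - Istar)) - (r + γ)
    ∧ Astar.trace < 0
    ∧ spectrum ℝ Astar = {0, Astar.trace} :=
  Astar_spectrum_general r γ k β hr hγ hk hβ Sstar Tstar Istar hSstar hTstar hIstar Astar hAstar
end

section
/- Let A be a real n×n matrix and E ⊆ ℝⁿ a linear subspace invariant under A such that ‖e^{tA} X‖ ≤ e^{−α₁ t}‖X‖ for all X ∈ E and t ≥ 0, for some α₁ > 0. Let G : ℝ → ℝⁿ be continuous with G(t) ∈ E and ‖G(t)‖ ≤ M₂ e^{−α₂ t} for all t ≥ 0, for some M₂ > 0 and α₂ > 0. If ξ : [0,∞) → ℝⁿ is differentiable with ξ'(t) = A ξ(t) + G(t) and ξ(0) ∈ E, then ξ(t) ∈ E for all t ≥ 0 and there exist M > 0 and α > 0 such that ‖ξ(t)‖ ≤ M e^{−αt} for all t ≥ 0. -/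
/-!
Duhamel's formula `ξ t = e^{tA} ξ 0 + ∫₀ᵗ e^{(t-s)A} G s ds` follows by differentiating
`s ↦ e^{(t-s)A} ξ s`, whose derivative is `e^{(t-s)A} G s`. Both terms lie in `E`, a closed
subspace stable under every `e^{tA}`, so the decay hypothesis applies to them and gives
`‖ξ t‖ ≤ e^{-α₁t}‖ξ 0‖ + M₂ t e^{-min(α₁,α₂)t}`; halving the rate absorbs the factor `t`.
-/

open NormedSpace MeasureTheory

section

variable {V : Type*} [NormedAddCommGroup V] [NormedSpace ℝ V]

theorem norm_integral_exp_smul_apply_le {A : V →L[ℝ] V} {E : Submodule ℝ V} {G : ℝ → V}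
    {α₁ α₂ M₂ T : ℝ}
    (hdecay : ∀ t, 0 ≤ t → ∀ x ∈ E, ‖exp (t • A) x‖ ≤ Real.exp (-α₁ * t) * ‖x‖)
    (hGE : ∀ t, G t ∈ E) (hG : ∀ t, 0 ≤ t → ‖G t‖ ≤ M₂ * Real.exp (-α₂ * t))
    (hM₂ : 0 ≤ M₂) (hT : 0 ≤ T) :
    ‖∫ s in 0..T, exp ((T - s) • A) (G s)‖ ≤ M₂ * (T * Real.exp (-min α₁ α₂ * T)) := by
  have hbound : ∀ s ∈ Set.uIoc 0 T,
      ‖exp ((T - s) • A) (G s)‖ ≤ M₂ * Real.exp (-min α₁ α₂ * T) := by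
    intro s hs
    rw [Set.uIoc_of_le hT] at hs
    obtain ⟨hs0, hsT⟩ := hs
    calc ‖exp ((T - s) • A) (G s)‖
        ≤ Real.exp (-α₁ * (T - s)) * (M₂ * Real.exp (-α₂ * s)) :=
          (hdecay _ (sub_nonneg.mpr hsT) _ (hGE s)).trans (by gcongr; exact hG s hs0.le)
      _ = M₂ * Real.exp (-α₁ * (T - s) + -α₂ * s) := by rw [Real.exp_add]; ring
      _ ≤ M₂ * Real.exp (-min α₁ α₂ * T) := by
          gcongr
          nlinarith [min_le_left α₁ α₂, min_le_right α₁ α₂, sub_nonneg.mpr hsT]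
  have h := intervalIntegral.norm_integral_le_of_norm_le_const hbound
  rwa [sub_zero, abs_of_nonneg hT, mul_assoc, mul_comm (Real.exp _) T] at h

variable [CompleteSpace V]

theorem Submodule.integral_mem {X : Type*} [MeasurableSpace X] {μ : Measure X}
    {E : Submodule ℝ V} (hE : IsClosed (E : Set V)) {f : X → V} (hf : ∀ x, f x ∈ E) :
    ∫ x, f x ∂μ ∈ E := by
  have := hE.completeSpace_coe
  have h := E.subtypeₗᵢ.integral_comp_comm (μ := μ) fun x => (⟨f x, hf x⟩ : E)
  exact h ▸ (∫ x, (⟨f x, hf x⟩ : E) ∂μ).2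

theorem Submodule.intervalIntegral_mem {E : Submodule ℝ V} (hE : IsClosed (E : Set V))
    {f : ℝ → V} (hf : ∀ x, f x ∈ E) (a b : ℝ) : ∫ x in a..b, f x ∈ E :=
  E.sub_mem (E.integral_mem hE hf) (E.integral_mem hE hf)

theorem exp_smul_apply_mem_of_mapsTo {E : Submodule ℝ V} (hE : IsClosed (E : Set V))
    {A : V →L[ℝ] V} (hA : Set.MapsTo A E E) (t : ℝ) {x : V} (hx : x ∈ E) :
    exp (t • A) x ∈ E := by
  have hpow : ∀ k : ℕ, ((t • A) ^ k) x ∈ E := fun k => by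
    rw [FunLike.coe_pow_eq_iterate]
    exact Set.MapsTo.iterate (fun y hy => E.smul_mem t (hA hy)) k hx
  have hsum := (exp_series_hasSum_exp' (𝕂 := ℝ) (t • A)).mapL (ContinuousLinearMap.apply ℝ V x)
  exact hsum.tsum_eq ▸ tsum_mem hE fun k => E.smul_mem _ (hpow k)

theorem eq_exp_smul_apply_add_integral_of_hasDerivAt {A : V →L[ℝ] V} {G ξ : ℝ → V} {T : ℝ}
    (hT : 0 ≤ T) (hG : ContinuousOn G (Set.Icc 0 T))
    (hξ : ∀ t ∈ Set.Icc 0 T, HasDerivAt ξ (A (ξ t) + G t) t) :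
    ξ T = exp (T • A) (ξ 0) + ∫ s in 0..T, exp ((T - s) • A) (G s) := by
  have hderiv : ∀ s ∈ Set.Icc 0 T,
      HasDerivAt (fun s => exp ((T - s) • A) (ξ s)) (exp ((T - s) • A) (G s)) s := by
    intro s hs
    have hP : HasDerivAt (fun s => exp ((T - s) • A)) (-(exp ((T - s) • A) * A)) s := by
      have h := (hasDerivAt_exp_smul_const (𝕂 := ℝ) A (T - s)).scomp s
        ((hasDerivAt_id s).const_sub T)
      rwa [neg_one_smul] at h
    convert hP.clm_apply (hξ s hs) using 1
    simp
  have hcont : ContinuousOn (fun s => exp ((T - s) • A) (G s)) (Set.Icc 0 T) :=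
    ((differentiable_exp_smul_const ℝ A).continuous.comp
      (continuous_const.sub continuous_id)).continuousOn.clm_apply hG
  rw [← Set.uIcc_of_le hT] at hderiv hcont
  rw [intervalIntegral.integral_eq_sub_of_hasDerivAt hderiv hcont.intervalIntegrable]
  simp

end

-- `exp` only sees the topology of matrices, so any normed-algebra structure will do here.
theorem Matrix.toEuclideanCLM_exp {n : Type*} [Fintype n] [DecidableEq n] (A : Matrix n n ℝ) :
    toEuclideanCLM (𝕜 := ℝ) (exp A) = exp (toEuclideanCLM (𝕜 := ℝ) A) := by
  let _ : NormedRing (Matrix n n ℝ) := Matrix.linftyOpNormedRing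
  let _ : NormedAlgebra ℝ (Matrix n n ℝ) := Matrix.linftyOpNormedAlgebra
  have hcont : Continuous (toEuclideanCLM (𝕜 := ℝ) (n := n)) :=
    (toEuclideanCLM (𝕜 := ℝ) (n := n)).toAlgEquiv.toLinearMap.continuous_of_finiteDimensional
  exact map_exp_of_mem_ball (𝕂 := ℝ) _ hcont A
    ((expSeries_radius_eq_top ℝ (Matrix n n ℝ)).symm ▸ edist_lt_top _ _)

theorem mul_exp_neg_mul_le {m : ℝ} (hm : 0 < m) (T : ℝ) :
    T * Real.exp (-m * T) ≤ 2 / m * Real.exp (-(m / 2) * T) := by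
  have hsplit : Real.exp (-m * T) = Real.exp (-(m / 2 * T)) * Real.exp (-(m / 2) * T) := by
    rw [← Real.exp_add]; ring_nf
  calc T * Real.exp (-m * T)
      = 2 / m * (m / 2 * T * Real.exp (-(m / 2 * T))) * Real.exp (-(m / 2) * T) := by
        rw [hsplit]; field_simp
    _ ≤ 2 / m * Real.exp (-1) * Real.exp (-(m / 2) * T) := by
        gcongr
        exact Real.mul_exp_neg_le_exp_neg_one _
    _ ≤ 2 / m * Real.exp (-(m / 2) * T) := by
        gcongr
        exact mul_le_of_le_one_right (by positivity) (Real.exp_le_one_iff.mpr (by norm_num))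

/-- Exponential decay for a linear inhomogeneous ODE `ξ' = Aξ + G` on an
`A`-invariant subspace `E` of `ℝⁿ` on which the semigroup `e^{tA}` decays exponentially,
with forcing term `G` valued in `E` and decaying exponentially. -/
theorem linear_ode_exponential_decay_on_invariant_subspace
    (n : ℕ) (A : Matrix (Fin n) (Fin n) ℝ)
    (E : Submodule ℝ (EuclideanSpace ℝ (Fin n)))
    (hinv : ∀ X ∈ E, Matrix.toEuclideanLin A X ∈ E)
    (α₁ : ℝ) (hα₁ : 0 < α₁)
    (hdecay : ∀ t : ℝ, 0 ≤ t → ∀ X ∈ E,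
      ‖Matrix.toEuclideanLin (NormedSpace.exp (t • A)) X‖ ≤ Real.exp (-α₁ * t) * ‖X‖)
    (G : ℝ → EuclideanSpace ℝ (Fin n)) (hGcont : Continuous G) (hGE : ∀ t, G t ∈ E)
    (M₂ α₂ : ℝ) (hM₂ : 0 < M₂) (hα₂ : 0 < α₂)
    (hG : ∀ t : ℝ, 0 ≤ t → ‖G t‖ ≤ M₂ * Real.exp (-α₂ * t))
    (ξ : ℝ → EuclideanSpace ℝ (Fin n))
    (hξ : ∀ t : ℝ, 0 ≤ t → HasDerivAt ξ (Matrix.toEuclideanLin A (ξ t) + G t) t)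
    (hξ0 : ξ 0 ∈ E) :
    (∀ t : ℝ, 0 ≤ t → ξ t ∈ E)
    ∧ ∃ M > (0:ℝ), ∃ α > (0:ℝ), ∀ t : ℝ, 0 ≤ t → ‖ξ t‖ ≤ M * Real.exp (-α * t) := by
  set 𝒜 := Matrix.toEuclideanCLM (𝕜 := ℝ) A
  have hE : IsClosed (E : Set (EuclideanSpace ℝ (Fin n))) := E.closed_of_finiteDimensional
  have hdecay𝒜 : ∀ t : ℝ, 0 ≤ t → ∀ X ∈ E, ‖exp (t • 𝒜) X‖ ≤ Real.exp (-α₁ * t) * ‖X‖ := by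
    intro t ht X hX
    rw [← map_smul, ← Matrix.toEuclideanCLM_exp]
    exact hdecay t ht X hX
  have hduhamel : ∀ t : ℝ, 0 ≤ t →
      ξ t = exp (t • 𝒜) (ξ 0) + ∫ s in 0..t, exp ((t - s) • 𝒜) (G s) := fun t ht =>
    eq_exp_smul_apply_add_integral_of_hasDerivAt ht hGcont.continuousOn fun s hs => hξ s hs.1
  refine ⟨fun t ht => ?_, ?_⟩
  · rw [hduhamel t ht]
    have hexpE := exp_smul_apply_mem_of_mapsTo (A := 𝒜) hE hinv
    exact E.add_mem (hexpE t hξ0) (E.intervalIntegral_mem hE (fun s => hexpE _ (hGE s)) _ _)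
  set m := min α₁ α₂
  have hm : 0 < m := lt_min hα₁ hα₂
  refine ⟨‖ξ 0‖ + 2 * M₂ / m, by positivity, m / 2, by positivity, fun t ht => ?_⟩
  calc ‖ξ t‖
      ≤ Real.exp (-α₁ * t) * ‖ξ 0‖ + M₂ * (t * Real.exp (-m * t)) := by
        rw [hduhamel t ht]
        exact (norm_add_le _ _).trans (add_le_add (hdecay𝒜 t ht _ hξ0)
          (norm_integral_exp_smul_apply_le hdecay𝒜 hGE hG hM₂.le ht))
    _ ≤ Real.exp (-(m / 2) * t) * ‖ξ 0‖ + M₂ * (2 / m * Real.exp (-(m / 2) * t)) := by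
        gcongr Real.exp ?_ * _ + _ * ?_
        · nlinarith [min_le_left α₁ α₂]
        · exact mul_exp_neg_mul_le hm t
    _ = (‖ξ 0‖ + 2 * M₂ / m) * Real.exp (-(m / 2) * t) := by ring
end

section
/- Consider the spatial replicator system on P patches and N strains with a Metzler matrix M having zero row sums and d ≥ 0. If z : [0,∞) → (ℝ^N)^P is a solution with z_p(0) ∈ Σ_N for every p ∈ {1,…,P}, then z_p(τ) ∈ Σ_N for every p and every τ ≥ 0; that is, the product of simplices Σ_N × ⋯ × Σ_N (P factors) is positively invariant. -/
/-!
Along a solution, the deficits `∑ i, z_p^i - 1` of the patch totals (because `M` has zero row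
sums) and, for each strain `i`, the vectors `(z_p^i)_p` both solve linear systems
`w' = (diag α(τ) + d • M) w` with continuous `α`. Since `d • M` is Metzler, such systems preserve
the nonnegative orthant: `V = ∑ p, min (w p) 0 ^ 2` satisfies `V' ≤ K V` and starts at `0`, so
Grönwall keeps it at `0`. Applied to `±(∑ i, z_p^i - 1)` this keeps the totals equal to `1`, and
applied to `z^i` it keeps the coordinates nonnegative, hence in `[0, 1]`.
-/

open Set Filter Topology Finset Asymptotics Matrix

theorem hasDerivAt_min_zero_sq (x : ℝ) :
    HasDerivAt (fun y : ℝ => min y 0 ^ 2) (2 * min x 0) x := by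
  rcases lt_trichotomy x 0 with hx | rfl | hx
  · have : (fun y : ℝ => min y 0 ^ 2) =ᶠ[𝓝 x] fun y => y ^ 2 := by
      filter_upwards [Iio_mem_nhds hx] with y hy
      rw [min_eq_left (le_of_lt hy)]
    simpa [min_eq_left hx.le] using (hasDerivAt_pow 2 x).congr_of_eventuallyEq this
  · rw [hasDerivAt_iff_isLittleO_nhds_zero]
    simp only [zero_add, min_self, ne_eq, OfNat.ofNat_ne_zero, not_false_eq_true, zero_pow,
      mul_zero, smul_zero, sub_zero]
    refine (IsBigO.of_bound 1 (Eventually.of_forall fun y => ?_)).trans_isLittleO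
      (isLittleO_pow_id one_lt_two)
    rcases le_total y 0 with hy | hy <;> simp [hy]
  · have : (fun y : ℝ => min y 0 ^ 2) =ᶠ[𝓝 x] fun _ => 0 := by
      filter_upwards [Ioi_mem_nhds hx] with y hy
      simp [(mem_Ioi.1 hy).le]
    simpa [min_eq_right hx.le] using (hasDerivAt_const x (0 : ℝ)).congr_of_eventuallyEq this

theorem min_zero_mul_self (x : ℝ) : min x 0 * x = min x 0 ^ 2 := by
  rcases le_total x 0 with h | h <;> simp [h, sq]

theorem nonpos_of_deriv_right_le_mul_self {f f' : ℝ → ℝ} {K a b : ℝ}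
    (hf : ContinuousOn f (Icc a b)) (hf' : ∀ x ∈ Ico a b, HasDerivWithinAt f (f' x) (Ici x) x)
    (bound : ∀ x ∈ Ico a b, f' x ≤ K * f x) (ha : f a ≤ 0) : ∀ x ∈ Icc a b, f x ≤ 0 := by
  intro x hx
  simpa [gronwallBound_ε0_δ0] using le_gronwallBound_of_liminf_deriv_right_le (ε := 0) hf
    (fun x hx _ hr => (hf' x hx).liminf_right_slope_le hr) ha (by simpa using bound) x hx

def Matrix.IsMetzler {ι : Type*} (B : Matrix ι ι ℝ) : Prop := ∀ p l, p ≠ l → 0 ≤ B p l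

theorem Matrix.IsMetzler.sum_min_zero_mul_mulVec_le {ι : Type*} [Fintype ι] {B : Matrix ι ι ℝ}
    (hB : B.IsMetzler) {K : ℝ} (hK : 0 ≤ K) (hBK : ∀ p l, B p l ≤ K) (w : ι → ℝ) :
    ∑ p, min (w p) 0 * (B *ᵥ w) p ≤ Fintype.card ι ^ 2 * K * ∑ p, min (w p) 0 ^ 2 := by
  set V := ∑ p, min (w p) 0 ^ 2
  have hV : ∀ p, min (w p) 0 ^ 2 ≤ V := fun p =>
    single_le_sum (f := fun q => min (w q) 0 ^ 2) (fun q _ => sq_nonneg _) (mem_univ p)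
  have hV0 : 0 ≤ V := sum_nonneg fun q _ => sq_nonneg _
  have hterm : ∀ p l, min (w p) 0 * (B p l * w l) ≤ K * V := by
    intro p l
    rcases eq_or_ne p l with rfl | hpl
    · calc min (w p) 0 * (B p p * w p) = B p p * min (w p) 0 ^ 2 := by
            rw [← min_zero_mul_self]; ring
        _ ≤ K * V := mul_le_mul (hBK p p) (hV p) (sq_nonneg _) hK
    · have hcross : min (w p) 0 * w l ≤ V :=
        calc min (w p) 0 * w l ≤ min (w p) 0 * min (w l) 0 :=
              mul_le_mul_of_nonpos_left (min_le_left _ _) (min_le_right _ _)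
          _ ≤ V := by nlinarith [hV p, hV l, sq_nonneg (min (w p) 0 - min (w l) 0)]
      calc min (w p) 0 * (B p l * w l) = B p l * (min (w p) 0 * w l) := by ring
        _ ≤ B p l * V := mul_le_mul_of_nonneg_left hcross (hB p l hpl)
        _ ≤ K * V := mul_le_mul_of_nonneg_right (hBK p l) hV0
  calc ∑ p, min (w p) 0 * (B *ᵥ w) p = ∑ p, ∑ l, min (w p) 0 * (B p l * w l) := by
        simp only [mulVec, dotProduct, mul_sum]
    _ ≤ ∑ _p : ι, ∑ _l : ι, K * V := sum_le_sum fun p _ => sum_le_sum fun l _ => hterm p l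
    _ = Fintype.card ι ^ 2 * K * V := by
        rw [sum_const, sum_const, card_univ, smul_smul, nsmul_eq_mul]
        push_cast
        ring

theorem nonneg_of_hasDerivAt_mulVec_of_isMetzler {ι : Type*} [Fintype ι] {B : ℝ → Matrix ι ι ℝ}
    {w : ℝ → ι → ℝ} {a b : ℝ} (hB : ∀ p l, ContinuousOn (fun t => B t p l) (Icc a b))
    (hMetzler : ∀ t ∈ Icc a b, (B t).IsMetzler)
    (hw : ∀ t ∈ Icc a b, ∀ p, HasDerivAt (fun s => w s p) ((B t *ᵥ w t) p) t)
    (ha : ∀ p, 0 ≤ w a p) : ∀ t ∈ Icc a b, ∀ p, 0 ≤ w t p := by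
  obtain ⟨C, hC⟩ := isCompact_Icc.exists_bound_of_continuousOn
    (f := fun t (p l : ι) => B t p l) (continuousOn_pi.2 fun p => continuousOn_pi.2 (hB p))
  have hBK : ∀ t ∈ Icc a b, ∀ p l, B t p l ≤ max C 0 := fun t ht p l =>
    calc B t p l ≤ ‖(fun p l => B t p l : ι → ι → ℝ)‖ :=
          (le_abs_self _).trans ((norm_le_pi_norm (fun l => B t p l) l).trans
            (norm_le_pi_norm (fun p l => B t p l) p))
      _ ≤ max C 0 := (hC t ht).trans (le_max_left _ _)
  set V : ℝ → ℝ := fun t => ∑ p, min (w t p) 0 ^ 2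
  have hV : ∀ t ∈ Icc a b, HasDerivAt V (∑ p, 2 * min (w t p) 0 * (B t *ᵥ w t) p) t :=
    fun t ht => HasDerivAt.fun_sum fun p _ => (hasDerivAt_min_zero_sq _).comp t (hw t ht p)
  have hV_nonpos : ∀ t ∈ Icc a b, V t ≤ 0 := by
    refine nonpos_of_deriv_right_le_mul_self (K := 2 * (Fintype.card ι ^ 2 * max C 0))
      (fun t ht => (hV t ht).continuousAt.continuousWithinAt)
      (fun t ht => (hV t (Ico_subset_Icc_self ht)).hasDerivWithinAt) (fun t ht => ?_) ?_
    · have ht' := Ico_subset_Icc_self ht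
      calc ∑ p, 2 * min (w t p) 0 * (B t *ᵥ w t) p
          = 2 * ∑ p, min (w t p) 0 * (B t *ᵥ w t) p := by simp only [mul_sum, mul_assoc]
        _ ≤ 2 * (Fintype.card ι ^ 2 * max C 0 * V t) := by
            gcongr
            exact (hMetzler t ht').sum_min_zero_mul_mulVec_le (le_max_right C 0) (hBK t ht') _
        _ = 2 * (Fintype.card ι ^ 2 * max C 0) * V t := by ring
    · simp [V, ha]
  intro t ht p
  have hmin : min (w t p) 0 ^ 2 ≤ 0 := (single_le_sum (f := fun q => min (w t q) 0 ^ 2)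
    (fun q _ => sq_nonneg _) (mem_univ p)).trans (hV_nonpos t ht)
  exact min_eq_right_iff.1 (pow_eq_zero_iff two_ne_zero |>.1 (le_antisymm hmin (sq_nonneg _)))

section DiagonalAddMetzler

variable {ι : Type*} [Fintype ι] [DecidableEq ι] {α : ℝ → ι → ℝ} {C : Matrix ι ι ℝ}
  {w : ℝ → ι → ℝ} {a b : ℝ}

theorem nonneg_of_hasDerivAt_diagonal_add_isMetzler
    (hα : ∀ p, ContinuousOn (fun t => α t p) (Icc a b)) (hC : C.IsMetzler)
    (hw : ∀ t ∈ Icc a b, ∀ p, HasDerivAt (fun s => w s p) (α t p * w t p + (C *ᵥ w t) p) t)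
    (ha : ∀ p, 0 ≤ w a p) : ∀ t ∈ Icc a b, ∀ p, 0 ≤ w t p := by
  refine nonneg_of_hasDerivAt_mulVec_of_isMetzler (B := fun t => diagonal (α t) + C)
    (fun p l => ?_) (fun t _ p l hpl => ?_) (fun t ht p => ?_) ha
  · simp only [Matrix.add_apply, diagonal_apply]
    split_ifs
    · exact (hα p).add continuousOn_const
    · exact continuousOn_const
  · simpa [diagonal_apply_ne _ hpl] using hC p l hpl
  · simpa [add_mulVec, mulVec_diagonal] using hw t ht p

theorem eq_zero_of_hasDerivAt_diagonal_add_isMetzler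
    (hα : ∀ p, ContinuousOn (fun t => α t p) (Icc a b)) (hC : C.IsMetzler)
    (hw : ∀ t ∈ Icc a b, ∀ p, HasDerivAt (fun s => w s p) (α t p * w t p + (C *ᵥ w t) p) t)
    (ha : w a = 0) : ∀ t ∈ Icc a b, w t = 0 := by
  have hneg : ∀ t ∈ Icc a b, ∀ p, 0 ≤ -w t p :=
    nonneg_of_hasDerivAt_diagonal_add_isMetzler (w := -w) hα hC
      (fun t ht p => by simpa [mulVec_neg, add_comm] using (hw t ht p).fun_neg) (by simp [ha])
  intro t ht
  funext p
  exact le_antisymm (neg_nonneg.1 (hneg t ht p))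
    (nonneg_of_hasDerivAt_diagonal_add_isMetzler hα hC hw (by simp [ha]) t ht p)

end DiagonalAddMetzler

section Replicator

variable {ι κ : Type*} [Fintype ι] [Fintype κ]

def meanFitness (A : Matrix κ κ ℝ) (y : κ → ℝ) : ℝ := ∑ i', ∑ j, y i' * A i' j * y j

def replicatorField (Θ : ι → ℝ) (Λ : ι → Matrix κ κ ℝ) (d : ℝ) (M : Matrix ι ι ℝ)
    (x : ι → κ → ℝ) (p : ι) (i : κ) : ℝ :=
  Θ p * x p i * ((∑ j, Λ p i j * x p j) - meanFitness (Λ p) (x p)) + d * ∑ l, M p l * x l i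

theorem replicatorField_eq (Θ : ι → ℝ) (Λ : ι → Matrix κ κ ℝ) (d : ℝ) (M : Matrix ι ι ℝ)
    (x : ι → κ → ℝ) (p : ι) (i : κ) :
    replicatorField Θ Λ d M x p i =
      Θ p * ((Λ p *ᵥ x p) i - meanFitness (Λ p) (x p)) * x p i + ((d • M) *ᵥ fun l => x l i) p := by
  simp only [replicatorField, mulVec, dotProduct, Matrix.smul_apply, smul_eq_mul, mul_sum,
    mul_assoc]
  ring

theorem sum_replicatorField (Θ : ι → ℝ) (Λ : ι → Matrix κ κ ℝ) (d : ℝ) {M : Matrix ι ι ℝ}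
    (hrow : ∀ p, ∑ l, M p l = 0) (x : ι → κ → ℝ) (p : ι) :
    ∑ i, replicatorField Θ Λ d M x p i =
      -(Θ p * meanFitness (Λ p) (x p)) * (∑ i, x p i - 1) +
        ((d • M) *ᵥ fun l => ∑ i, x l i - 1) p := by
  have hQ : ∑ i, x p i * ∑ j, Λ p i j * x p j = meanFitness (Λ p) (x p) := by
    simp only [meanFitness, mul_sum, mul_assoc]
  have hM : ∑ i, ∑ l, M p l * x l i = ∑ l, M p l * (∑ i, x l i - 1) := by
    simp only [mul_sub, mul_one, sum_sub_distrib, hrow p, sub_zero, mul_sum]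
    exact sum_comm
  calc ∑ i, replicatorField Θ Λ d M x p i
      = ∑ i, (Θ p * (x p i * ∑ j, Λ p i j * x p j) - Θ p * meanFitness (Λ p) (x p) * x p i
          + d * ∑ l, M p l * x l i) := sum_congr rfl fun i _ => by unfold replicatorField; ring
    _ = Θ p * ∑ i, x p i * ∑ j, Λ p i j * x p j - Θ p * meanFitness (Λ p) (x p) * ∑ i, x p i
          + d * ∑ i, ∑ l, M p l * x l i := by
        rw [sum_add_distrib, sum_sub_distrib, mul_sum, mul_sum, mul_sum]
    _ = _ := by
        rw [hQ, hM]
        simp only [mulVec, dotProduct, Matrix.smul_apply, smul_eq_mul, mul_assoc, ← mul_sum]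
        ring

end Replicator

theorem spatial_replicator_simplex_invariant_general
    (P N : ℕ)
    (Θ : Fin P → ℝ) (Λ : Fin P → Matrix (Fin N) (Fin N) ℝ)
    (d : ℝ) (hd : 0 ≤ d)
    (M : Matrix (Fin P) (Fin P) ℝ)
    (hMetzler : ∀ p l, p ≠ l → 0 ≤ M p l)
    (hrow : ∀ p, ∑ l, M p l = 0)
    (z : ℝ → Fin P → Fin N → ℝ)
    (hz : ∀ τ : ℝ, 0 ≤ τ → ∀ p i, HasDerivAt (fun s => z s p i)
      (Θ p * z τ p i * ((∑ j, Λ p i j * z τ p j)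
          - ∑ i', ∑ j, z τ p i' * Λ p i' j * z τ p j)
        + d * ∑ l, M p l * z τ l i) τ)
    (hinit : ∀ p, (∀ i, z 0 p i ∈ Set.Icc (0:ℝ) 1) ∧ ∑ i, z 0 p i = 1) :
    ∀ τ : ℝ, 0 ≤ τ → ∀ p, (∀ i, z τ p i ∈ Set.Icc (0:ℝ) 1) ∧ ∑ i, z τ p i = 1 := by
  intro b hb
  have hcont : ∀ p i, ContinuousOn (fun s => z s p i) (Icc 0 b) := fun p i τ hτ =>
    (hz τ hτ.1 p i).continuousAt.continuousWithinAt
  have hfit : ∀ p, ContinuousOn (fun s => meanFitness (Λ p) (z s p)) (Icc 0 b) := fun p => by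
    unfold meanFitness
    fun_prop
  have hdM : (d • M).IsMetzler := fun p l hpl => mul_nonneg hd (hMetzler p l hpl)
  have hsum : ∀ p, ∑ i, z b p i = 1 := fun p => sub_eq_zero.1 <| congrFun
    (eq_zero_of_hasDerivAt_diagonal_add_isMetzler (w := fun s p => ∑ i, z s p i - 1)
      (fun p => (continuousOn_const.mul (hfit p)).neg) hdM
      (fun τ hτ p => ((HasDerivAt.fun_sum fun i _ => hz τ hτ.1 p i).sub_const 1).congr_deriv
        (sum_replicatorField Θ Λ d hrow (z τ) p))
      (funext fun p => sub_eq_zero.2 (hinit p).2) b ⟨hb, le_rfl⟩) p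
  have hnonneg : ∀ p i, 0 ≤ z b p i := fun p i =>
    nonneg_of_hasDerivAt_diagonal_add_isMetzler (w := fun s p => z s p i)
      (α := fun s p => Θ p * ((Λ p *ᵥ z s p) i - meanFitness (Λ p) (z s p)))
      (fun p => by simp only [mulVec, dotProduct]; fun_prop) hdM
      (fun τ hτ p => (hz τ hτ.1 p i).congr_deriv (replicatorField_eq Θ Λ d M (z τ) p i))
      (fun p => ((hinit p).1 i).1) b ⟨hb, le_rfl⟩ p
  refine fun p => ⟨fun i => ⟨hnonneg p i, ?_⟩, hsum p⟩
  exact hsum p ▸ single_le_sum (fun j _ => hnonneg p j) (mem_univ i)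

/-- The product of simplices `Σ_N × ⋯ × Σ_N` (`P` factors) is positively
invariant for the spatial replicator system with a Metzler migration matrix `M` having
zero row sums and `d ≥ 0`. -/
theorem spatial_replicator_simplex_invariant
    (P N : ℕ) (hP : 1 ≤ P) (hN : 1 ≤ N)
    (Θ : Fin P → ℝ) (Λ : Fin P → Matrix (Fin N) (Fin N) ℝ)
    (d : ℝ) (hd : 0 ≤ d)
    (M : Matrix (Fin P) (Fin P) ℝ)
    (hMetzler : ∀ p l, p ≠ l → 0 ≤ M p l)
    (hrow : ∀ p, ∑ l, M p l = 0)
    (z : ℝ → Fin P → Fin N → ℝ)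
    (hz : ∀ τ : ℝ, 0 ≤ τ → ∀ p i, HasDerivAt (fun s => z s p i)
      (Θ p * z τ p i * ((∑ j, Λ p i j * z τ p j)
          - ∑ i', ∑ j, z τ p i' * Λ p i' j * z τ p j)
        + d * ∑ l, M p l * z τ l i) τ)
    (hinit : ∀ p, (∀ i, z 0 p i ∈ Set.Icc (0:ℝ) 1) ∧ ∑ i, z 0 p i = 1) :
    ∀ τ : ℝ, 0 ≤ τ → ∀ p, (∀ i, z τ p i ∈ Set.Icc (0:ℝ) 1) ∧ ∑ i, z τ p i = 1 :=
  spatial_replicator_simplex_invariant_general P N Θ Λ d hd M hMetzler hrow z hz hinit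
end
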